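/- arXiv:0812.3236 — 8 statements merged into one kernel-verified Lean document; each statement's English description precedes it below -/
import Mathlib

section
/- Let M be an snt-module over F and let U ⊆ M be a t-stable isotropic subspace that is not properly contained in any other t-stable isotropic subspace of M. Then U is a Lagrangian subspace of M, i.e. U is isotropic of dimension (dim_F M)/2; hence U ∈ Gr(M,t). -/
/-- A symplectic nilpotent `t`-module (snt-module) over a field `F`. -/
structure SntModule (F M : Type*) [Field F] [AddCommGroup M] [Module F M] where
  form : M →ₗ[F] M →ₗ[F] F
  t : M →ₗ[F] M
  alt : ∀ x : M, form x x = 0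
  nondeg : ∀ x : M, (∀ y : M, form x y = 0) → x = 0
  nilp : ∃ N : ℕ, 0 < N ∧ t ^ N = 0
  selfdual : ∀ x y : M, form (t x) y = form x (t y)

/-!
The orthogonal `W = Uᗮ` of a `t`-stable isotropic subspace `U` contains `U` and is again
`t`-stable, since `t` is self-adjoint. If `W ≠ U`, nilpotency of `t` yields `v ∈ W \ U` with
`t v ∈ U`; then `U + F v` is still `t`-stable and isotropic, contradicting maximality. Hence
`U = Uᗮ`, and nondegeneracy gives `dim U = dim M - dim U`.
-/

theorem Submodule.exists_mem_notMem_apply_mem_of_isNilpotent {R M : Type*} [Semiring R]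
    [AddCommMonoid M] [Module R M] {f : Module.End R M} (hf : IsNilpotent f)
    {U W : Submodule R M} (hW : W ≤ W.comap f) (hWU : ¬W ≤ U) :
    ∃ v ∈ W, v ∉ U ∧ f v ∈ U := by
  obtain ⟨x, hxW, hxU⟩ := Set.not_subset.mp hWU
  obtain ⟨N, hN⟩ := hf
  obtain ⟨n, hn, hn_succ⟩ := Nat.exists_not_and_succ_of_not_zero_of_exists
    (p := fun n => (f ^ n) x ∈ U) (by simpa using hxU) ⟨N, by simp [hN]⟩
  refine ⟨(f ^ n) x, ?_, hn, ?_⟩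
  · rw [Module.End.pow_apply]
    exact Set.MapsTo.iterate (f := f) (s := W) hW n hxW
  · rwa [pow_succ', Module.End.mul_apply] at hn_succ

namespace LinearMap.BilinForm

variable {R M : Type*} [CommRing R] [AddCommGroup M] [Module R M] {B : LinearMap.BilinForm R M}
  {U : Submodule R M}

theorem orthogonal_le_comap_orthogonal {f : Module.End R M} (hf : IsAdjointPair B B f f)
    (hU : U ≤ U.comap f) : B.orthogonal U ≤ (B.orthogonal U).comap f :=
  fun x hx u hu => (hf u x).symm.trans (hx (f u) (hU hu))

theorem isotropic_sup_span_singleton (hB : B.IsAlt) (hU : ∀ x ∈ U, ∀ y ∈ U, B x y = 0)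
    {v : M} (hv : v ∈ B.orthogonal U) :
    ∀ x ∈ U ⊔ R ∙ v, ∀ y ∈ U ⊔ R ∙ v, B x y = 0 := by
  intro x hx y hy
  obtain ⟨u, hu, _, ha, rfl⟩ := Submodule.mem_sup.mp hx
  obtain ⟨u', hu', _, hb, rfl⟩ := Submodule.mem_sup.mp hy
  obtain ⟨a, rfl⟩ := Submodule.mem_span_singleton.mp ha
  obtain ⟨b, rfl⟩ := Submodule.mem_span_singleton.mp hb
  have hvu' : B v u' = 0 := hB.isRefl _ _ (hv u' hu')
  simp [hU u hu u' hu', hv u hu, hvu', hB v]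

theorem orthogonal_eq_self_of_maximal_isotropic (hB : B.IsAlt) {f : Module.End R M}
    (hf : IsNilpotent f) (hfB : IsAdjointPair B B f f) (hU : U ≤ U.comap f)
    (hiso : ∀ x ∈ U, ∀ y ∈ U, B x y = 0)
    (hmax : ∀ U' : Submodule R M, U' ≤ U'.comap f → (∀ x ∈ U', ∀ y ∈ U', B x y = 0) →
      U ≤ U' → U' = U) :
    B.orthogonal U = U := by
  refine le_antisymm ?_ fun x hx u hu => hiso u hu x hx
  by_contra hle
  obtain ⟨v, hvW, hvU, hfv⟩ := Submodule.exists_mem_notMem_apply_mem_of_isNilpotent hf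
    (orthogonal_le_comap_orthogonal hfB hU) hle
  have hstab : U ⊔ R ∙ v ≤ (U ⊔ R ∙ v).comap f :=
    sup_le (hU.trans (Submodule.comap_mono le_sup_left))
      ((Submodule.span_singleton_le_iff_mem _ _).mpr (Submodule.mem_sup_left hfv))
  have hUv := hmax _ hstab (isotropic_sup_span_singleton hB hiso hvW) le_sup_left
  exact hvU (hUv ▸ Submodule.mem_sup_right (Submodule.mem_span_singleton_self v))

end LinearMap.BilinForm

theorem snt_maximal_isotropic_is_lagrangian_general {F M : Type*} [Field F]
    [AddCommGroup M] [Module F M] [FiniteDimensional F M]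
    (S : SntModule F M) (U : Submodule F M)
    (hstab : ∀ x ∈ U, S.t x ∈ U)
    (hiso : ∀ x ∈ U, ∀ y ∈ U, S.form x y = 0)
    (hmax : ∀ U' : Submodule F M, (∀ x ∈ U', S.t x ∈ U') →
      (∀ x ∈ U', ∀ y ∈ U', S.form x y = 0) → U ≤ U' → U' = U) :
    2 * Module.finrank F U = Module.finrank F M := by
  have hB : LinearMap.BilinForm.IsAlt S.form := S.alt
  have hnil : IsNilpotent S.t := let ⟨N, _, hN⟩ := S.nilp; ⟨N, hN⟩
  have hself : LinearMap.BilinForm.orthogonal S.form U = U :=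
    LinearMap.BilinForm.orthogonal_eq_self_of_maximal_isotropic hB hnil S.selfdual hstab hiso hmax
  have hrank := LinearMap.BilinForm.finrank_orthogonal
    (hB.isRefl.nondegenerate_iff_separatingLeft.mpr S.nondeg) U
  rw [hself] at hrank
  have := Submodule.finrank_le U
  omega

/-- A `t`-stable isotropic subspace of an snt-module that is maximal
among `t`-stable isotropic subspaces is Lagrangian, i.e. has dimension `(dim M)/2`. -/
theorem snt_maximal_isotropic_is_lagrangian {F M : Type*} [Field F] [CharZero F]
    [AddCommGroup M] [Module F M] [FiniteDimensional F M]
    (S : SntModule F M) (U : Submodule F M)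
    (hstab : ∀ x ∈ U, S.t x ∈ U)
    (hiso : ∀ x ∈ U, ∀ y ∈ U, S.form x y = 0)
    (hmax : ∀ U' : Submodule F M, (∀ x ∈ U', S.t x ∈ U') →
      (∀ x ∈ U', ∀ y ∈ U', S.form x y = 0) → U ≤ U' → U' = U) :
    2 * Module.finrank F U = Module.finrank F M :=
  snt_maximal_isotropic_is_lagrangian_general S U hstab hiso hmax
end

section
/- Let M = H_k ⊕ ⋯ ⊕ H_k be a homogeneous snt-module consisting of n copies of H_k. Then the group Sp(M,t) is isomorphic to the symplectic group Sp_{2n}(F[t]/(t^k)) of 2n×2n symplectic matrices over the commutative ring F[t]/(t^k). In particular, reduction modulo t induces a surjective group homomorphism π_0 : Sp(M,t) → Sp_{2n}(F). -/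
open Matrix Polynomial

/-- Multiplication by `t` on `F[t]/(t^k)` in terms of coefficient vectors. -/
def hkShift {F : Type*} [Field F] {k : ℕ} (a : Fin k → F) : Fin k → F :=
  fun i => if h : (i : ℕ) = 0 then 0 else a ⟨(i : ℕ) - 1, by have := i.isLt; omega⟩

/-- The action of `t` on `H_k = F[t]/(t^k) ⊕ F[t]/(t^k)` in coordinates. -/
def hkT {F : Type*} [Field F] {k : ℕ} (x : (Fin k → F) × (Fin k → F)) :
    (Fin k → F) × (Fin k → F) :=
  (hkShift x.1, hkShift x.2)

/-- The symplectic form of `H_k`: both summands are isotropic and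
`⟨(t^i,0),(0,t^j)⟩ = 1` iff `i + j = k - 1`. -/
def hkForm {F : Type*} [Field F] {k : ℕ} (x y : (Fin k → F) × (Fin k → F)) : F :=
  (∑ i : Fin k, x.1 i * y.2 (Fin.rev i)) - ∑ i : Fin k, y.1 i * x.2 (Fin.rev i)

/-- The group of `F`-linear automorphisms of `M` preserving a given form
and commuting with a given map `T`; for an snt-module this is `Sp(M,t)`. -/
def sntSp (F M : Type*) [Field F] [AddCommGroup M] [Module F M]
    (form : M → M → F) (T : M → M) : Subgroup (M ≃ₗ[F] M) where
  carrier := {g | (∀ x y : M, form (g x) (g y) = form x y) ∧ ∀ x : M, g (T x) = T (g x)}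
  one_mem' := ⟨fun _ _ => rfl, fun _ => rfl⟩
  mul_mem' := by
    rintro a b ⟨ha1, ha2⟩ ⟨hb1, hb2⟩
    refine ⟨fun x y => ?_, fun x => ?_⟩
    · show form (a (b x)) (a (b y)) = form x y
      rw [ha1, hb1]
    · show a (b (T x)) = T (a (b x))
      rw [hb2, ha2]
  inv_mem' := by
    rintro a ⟨ha1, ha2⟩
    refine ⟨fun x y => ?_, fun x => ?_⟩
    · show form (a.symm x) (a.symm y) = form x y
      conv_rhs => rw [← a.apply_symm_apply x, ← a.apply_symm_apply y]
      rw [ha1]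
    · show a.symm (T x) = T (a.symm x)
      conv_lhs => rw [← a.apply_symm_apply x]
      rw [← ha2, a.symm_apply_apply]

lemma J_map {l R S : Type*} [DecidableEq l] [Fintype l] [CommRing R] [CommRing S]
    (f : R →+* S) : (Matrix.J l R).map f = Matrix.J l S := by
  ext i j
  cases i <;> cases j <;>
    simp [Matrix.J, Matrix.fromBlocks, Matrix.map_apply, Matrix.one_apply, apply_ite f]

/-- The group homomorphism between symplectic groups induced by applying
a ring homomorphism entrywise (e.g. reduction modulo `t`). -/
def spMap {l R S : Type*} [DecidableEq l] [Fintype l] [CommRing R] [CommRing S]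
    (f : R →+* S) :
    Matrix.symplecticGroup l R →* Matrix.symplecticGroup l S where
  toFun A := ⟨(A : Matrix (l ⊕ l) (l ⊕ l) R).map f, by
    have hA := A.2
    rw [SymplecticGroup.mem_iff] at hA ⊢
    rw [← Matrix.transpose_map, ← J_map f, ← Matrix.map_mul, ← Matrix.map_mul, hA]⟩
  map_one' := by
    ext i j
    simp [Matrix.map_apply, Matrix.one_apply, apply_ite f]
  map_mul' A B := by
    ext i j
    show ((A : Matrix (l ⊕ l) (l ⊕ l) R) * (B : Matrix (l ⊕ l) (l ⊕ l) R)).map f i j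
      = ((A : Matrix (l ⊕ l) (l ⊕ l) R).map f * (B : Matrix (l ⊕ l) (l ⊕ l) R).map f) i j
    rw [Matrix.map_mul]

/-- The ring homomorphism `F[t]/(t^k) → F` given by reduction modulo `t`
(evaluation at `0`), for `k ≥ 1`. -/
noncomputable def evalZeroQuot (F : Type*) [Field F] (k : ℕ) (hk : 0 < k) :
    (Polynomial F ⧸ Ideal.span {(Polynomial.X : Polynomial F) ^ k}) →+* F :=
  Ideal.Quotient.lift _ (Polynomial.evalRingHom (0 : F)) (by
    intro a ha
    rw [Ideal.mem_span_singleton] at ha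
    obtain ⟨c, rfl⟩ := ha
    simp [zero_pow hk.ne'])

/-!
Write `Q = F[t]/(t^k)` and `ε` for the class of `t`. Coordinates in the monomial basis identify
`H_k^n` with `Q^{2n}`, turning `t` into multiplication by `ε` and the form into `ℓ ∘ ω`, where `ω`
is the standard symplectic form over `Q` and `ℓ` takes the coefficient of `t^(k-1)`. Since `ε`
generates `Q`, an `F`-linear map commuting with `ε` is `Q`-linear; since `(q, r) ↦ ℓ (q r)` is a
nondegenerate pairing on `Q`, a `Q`-linear map preserves `ℓ ∘ ω` iff it preserves `ω`. So
`Sp(M,t)` is the group of `Q`-linear automorphisms of `Q^{2n}` preserving `ω`, i.e. `Sp_{2n}(Q)`.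
Reduction modulo `t` is split by the constants `F → Q`, hence surjective on `Sp_{2n}`.
-/

namespace sntSp

variable {F M N : Type*} [Field F] [AddCommGroup M] [Module F M] [AddCommGroup N] [Module F N]
  {form : M → M → F} {T : M → M} {form' : N → N → F} {T' : N → N}

theorem conj_mem (e : M ≃ₗ[F] N) (he_form : ∀ x y, form' (e x) (e y) = form x y)
    (he_T : ∀ x, e (T x) = T' (e x)) {g : M ≃ₗ[F] M} (hg : g ∈ sntSp F M form T) :
    e.symm ≪≫ₗ g ≪≫ₗ e ∈ sntSp F N form' T' := by
  refine ⟨fun x y => ?_, fun x => ?_⟩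
  · simp only [LinearEquiv.trans_apply, he_form, hg.1]
    rw [← he_form, e.apply_symm_apply, e.apply_symm_apply]
  · have hT' : T' x = e (T (e.symm x)) := by rw [he_T, e.apply_symm_apply]
    simp only [LinearEquiv.trans_apply]
    rw [hT', e.symm_apply_apply, hg.2, he_T]

def congr (e : M ≃ₗ[F] N) (he_form : ∀ x y, form' (e x) (e y) = form x y)
    (he_T : ∀ x, e (T x) = T' (e x)) : sntSp F M form T ≃* sntSp F N form' T' where
  toFun g := ⟨e.symm ≪≫ₗ g ≪≫ₗ e, conj_mem e he_form he_T g.2⟩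
  invFun g := ⟨e ≪≫ₗ g ≪≫ₗ e.symm, conj_mem e.symm
    (fun x y => by rw [← he_form, e.apply_symm_apply, e.apply_symm_apply])
    (fun x => e.injective (by rw [he_T, e.apply_symm_apply, e.apply_symm_apply])) g.2⟩
  left_inv g := by ext; simp
  right_inv g := by ext; simp
  map_mul' g h := by ext; simp

end sntSp

theorem LinearMap.map_smul_of_adjoin_eq_top {F Q V W : Type*} [CommRing F] [CommRing Q]
    [Algebra F Q] [AddCommMonoid V] [Module Q V] [Module F V] [IsScalarTower F Q V]
    [AddCommMonoid W] [Module Q W] [Module F W] [IsScalarTower F Q W] {ε : Q}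
    (hε : Algebra.adjoin F {ε} = ⊤) (f : V →ₗ[F] W) (hf : ∀ v, f (ε • v) = ε • f v)
    (q : Q) (v : V) : f (q • v) = q • f v := by
  have hq : q ∈ Algebra.adjoin F {ε} := hε ▸ Algebra.mem_top
  induction hq using Algebra.adjoin_induction generalizing v with
  | mem x hx => rw [Set.mem_singleton_iff.1 hx, hf]
  | algebraMap r => rw [algebraMap_smul, algebraMap_smul, f.map_smul]
  | add x y _ _ hx hy => rw [add_smul, add_smul, map_add, hx, hy]
  | mul x y _ _ hx hy => rw [mul_smul, mul_smul, hx, hy]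

theorem LinearMap.BilinForm.apply_map_eq_of_functional_apply_map_eq {F Q V : Type*}
    [CommRing F] [CommRing Q] [Algebra F Q] [AddCommGroup V] [Module Q V] {ℓ : Q →ₗ[F] F}
    (hℓ : ∀ r, (∀ q, ℓ (q * r) = 0) → r = 0) (B : LinearMap.BilinForm Q V) {f : V →ₗ[Q] V}
    (hf : ∀ v w, ℓ (B (f v) (f w)) = ℓ (B v w)) (v w : V) : B (f v) (f w) = B v w := by
  refine sub_eq_zero.1 (hℓ _ fun q => ?_)
  rw [mul_sub, ← smul_eq_mul, ← smul_eq_mul, ← LinearMap.map_smul₂, ← LinearMap.map_smul₂,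
    ← f.map_smul, map_sub, hf, sub_self]

namespace Matrix

variable {l R : Type*} [Fintype l] [DecidableEq l] [CommRing R]

theorem mem_symplecticGroup_iff_dotProduct {A : Matrix (l ⊕ l) (l ⊕ l) R} :
    A ∈ symplecticGroup l R ↔
      ∀ v w, (A *ᵥ v) ⬝ᵥ (J l R *ᵥ (A *ᵥ w)) = v ⬝ᵥ (J l R *ᵥ w) := by
  rw [SymplecticGroup.mem_iff',
    ← (toLinearMap₂' R (S₁ := R) (S₂ := R) (N₂ := R) (n := l ⊕ l) (m := l ⊕ l)).injective.eq_iff,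
    LinearMap.ext_iff₂]
  simp only [toLinearMap₂'_apply', ← mulVec_mulVec, dotProduct_mulVec, vecMul_transpose]

theorem dotProduct_J_mulVec (v w : l ⊕ l → R) :
    v ⬝ᵥ (J l R *ᵥ w) = ∑ i, (v (.inr i) * w (.inl i) - w (.inr i) * v (.inl i)) := by
  simp [J, fromBlocks_mulVec, dotProduct, Fintype.sum_sum_type, neg_mulVec,
    Finset.sum_sub_distrib, mul_comm, neg_add_eq_sub]

end Matrix

section SymplecticGroupOverAlgebra

variable {F Q : Type*} [Field F] [CommRing Q] [Algebra F Q] (l : Type*) [Fintype l] [DecidableEq l]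
  {ε : Q} {ℓ : Q →ₗ[F] F}

abbrev sntSpOfFunctional (ε : Q) (ℓ : Q →ₗ[F] F) : Subgroup ((l ⊕ l → Q) ≃ₗ[F] (l ⊕ l → Q)) :=
  sntSp F (l ⊕ l → Q) (fun v w => ℓ (v ⬝ᵥ (J l Q *ᵥ w))) (ε • ·)

theorem toModuleAut_mem_sntSpOfFunctional (S : symplecticGroup l Q) :
    DistribMulAction.toModuleAut F (l ⊕ l → Q) S ∈ sntSpOfFunctional l ε ℓ :=
  ⟨fun v w => congrArg ℓ (mem_symplecticGroup_iff_dotProduct.1 S.2 v w),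
    fun v => mulVec_smul (S : Matrix (l ⊕ l) (l ⊕ l) Q) ε v⟩

def symplecticGroupToSntSp : symplecticGroup l Q →* sntSpOfFunctional l ε ℓ :=
  (DistribMulAction.toModuleAut F (l ⊕ l → Q)).codRestrict _
    (toModuleAut_mem_sntSpOfFunctional l)

theorem symplecticGroupToSntSp_injective :
    Function.Injective (symplecticGroupToSntSp l (ε := ε) (ℓ := ℓ)) := fun _ _ h =>
  Subtype.ext <| ext_iff_mulVec.2 fun v => LinearEquiv.congr_fun (congrArg Subtype.val h) v

theorem symplecticGroupToSntSp_surjective (hε : Algebra.adjoin F {ε} = ⊤)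
    (hℓ : ∀ r, (∀ q, ℓ (q * r) = 0) → r = 0) :
    Function.Surjective (symplecticGroupToSntSp l (ε := ε) (ℓ := ℓ)) := by
  rintro ⟨g, hg_form, hg_smul⟩
  let gQ : (l ⊕ l → Q) →ₗ[Q] (l ⊕ l → Q) :=
    { g with map_smul' := g.toLinearMap.map_smul_of_adjoin_eq_top hε hg_smul }
  have hgQ : ∀ v, LinearMap.toMatrix' gQ *ᵥ v = g v := LinearMap.toMatrix'_mulVec gQ
  have hS : LinearMap.toMatrix' gQ ∈ symplecticGroup l Q := by
    refine mem_symplecticGroup_iff_dotProduct.2 fun v w => ?_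
    simp only [hgQ, ← toLinearMap₂'_apply']
    refine LinearMap.BilinForm.apply_map_eq_of_functional_apply_map_eq hℓ _ (f := gQ)
      (fun v w => ?_) v w
    simp only [toLinearMap₂'_apply']
    exact hg_form v w
  exact ⟨⟨_, hS⟩, Subtype.ext <| LinearEquiv.ext hgQ⟩

noncomputable def symplecticGroupEquivSntSp (hε : Algebra.adjoin F {ε} = ⊤)
    (hℓ : ∀ r, (∀ q, ℓ (q * r) = 0) → r = 0) : symplecticGroup l Q ≃* sntSpOfFunctional l ε ℓ :=
  MulEquiv.ofBijective (symplecticGroupToSntSp l)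
    ⟨symplecticGroupToSntSp_injective l, symplecticGroupToSntSp_surjective l hε hℓ⟩

end SymplecticGroupOverAlgebra

section TruncatedPolynomial

variable (F : Type*) [Field F] (k : ℕ)

local notation "Q" => AdjoinRoot (X ^ k : F[X])

local notation "ε" => AdjoinRoot.root (X ^ k : F[X])

theorem root_X_pow_pow_eq_zero {m : ℕ} (hm : k ≤ m) : ε ^ m = 0 := by
  obtain ⟨m, rfl⟩ := Nat.exists_eq_add_of_le hm
  rw [pow_add, ← AdjoinRoot.mk_X, ← map_pow, AdjoinRoot.mk_self, zero_mul]

noncomputable def monomialBasis : Module.Basis (Fin k) F Q :=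
  (AdjoinRoot.powerBasis' (monic_X_pow k)).basis.reindex (finCongr (natDegree_X_pow k))

theorem monomialBasis_apply (i : Fin k) : monomialBasis F k i = ε ^ (i : ℕ) := by
  rw [monomialBasis, Module.Basis.reindex_apply, PowerBasis.basis_eq_pow]
  rfl

noncomputable def coords : (Fin k → F) ≃ₗ[F] Q := (monomialBasis F k).equivFun.symm

theorem coords_apply (a : Fin k → F) : coords F k a = ∑ i, a i • ε ^ (i : ℕ) := by
  simp only [coords, Module.Basis.equivFun_symm_apply, monomialBasis_apply]

theorem coords_hkShift (a : Fin k → F) : coords F k (hkShift a) = ε * coords F k a := by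
  cases k with
  | zero => simp [coords_apply]
  | succ m =>
    have h0 : hkShift a 0 = 0 := dif_pos rfl
    have hsucc : ∀ i : Fin m, hkShift a i.succ = a i.castSucc :=
      fun _ => dif_neg (Nat.succ_ne_zero _)
    rw [coords_apply, coords_apply, Fin.sum_univ_succ, Finset.mul_sum, Fin.sum_univ_castSucc]
    simp only [h0, hsucc, mul_smul_comm, ← pow_succ', Fin.val_succ, Fin.val_castSucc, Fin.val_last,
      root_X_pow_pow_eq_zero F (m + 1) le_rfl, zero_smul, smul_zero, zero_add, add_zero]

variable {k} (hk : 0 < k)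

noncomputable def topCoeff : Q →ₗ[F] F := (monomialBasis F k).coord ⟨k - 1, by omega⟩

theorem topCoeff_root_pow (m : ℕ) : topCoeff F hk (ε ^ m) = if m = k - 1 then 1 else 0 := by
  rcases lt_or_ge m k with hm | hm
  · rw [← monomialBasis_apply F k ⟨m, hm⟩, topCoeff, Module.Basis.coord_apply,
      Module.Basis.repr_self, Finsupp.single_apply]
    simp [Fin.ext_iff]
  · rw [root_X_pow_pow_eq_zero F k hm, map_zero, if_neg (by omega)]

theorem topCoeff_coords_mul_coords (a b : Fin k → F) :
    topCoeff F hk (coords F k a * coords F k b) = ∑ i, a i * b (Fin.rev i) := by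
  have hrev : ∀ i j : Fin k, (i : ℕ) + j = k - 1 ↔ j = Fin.rev i := fun i j => by
    rw [Fin.ext_iff, Fin.val_rev]; omega
  simp only [coords_apply, Finset.sum_mul_sum, smul_mul_smul_comm, ← pow_add, map_sum,
    map_smul, topCoeff_root_pow, hrev, smul_eq_mul, mul_ite, mul_one, mul_zero,
    Finset.sum_ite_eq', Finset.mem_univ, if_true]

theorem topCoeff_mul_nondegenerate (r : Q) (h : ∀ q, topCoeff F hk (q * r) = 0) : r = 0 := by
  obtain ⟨c, rfl⟩ := (coords F k).surjective r
  suffices c = 0 by rw [this, map_zero]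
  funext i
  simpa [topCoeff_coords_mul_coords, Pi.single_apply] using
    h (coords F k (Pi.single (Fin.rev i) 1))

end TruncatedPolynomial

section HomogeneousModule

variable (F : Type*) [Field F] (n k : ℕ)

/-- The second summands of the copies of `H_k` go to the first `n` coordinates: this matches the
sign convention of `J`. -/
noncomputable def hkEquiv :
    (Fin n → (Fin k → F) × (Fin k → F)) ≃ₗ[F] (Fin n ⊕ Fin n → AdjoinRoot (X ^ k : F[X])) where
  toFun x := Sum.elim (fun i => coords F k (x i).2) (fun i => coords F k (x i).1)
  invFun v i := ((coords F k).symm (v (.inr i)), (coords F k).symm (v (.inl i)))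
  map_add' x y := by funext s; cases s <;> simp
  map_smul' c x := by funext s; cases s <;> simp
  left_inv x := by funext i; simp
  right_inv v := by funext s; cases s <;> simp

theorem hkEquiv_hkT (x : Fin n → (Fin k → F) × (Fin k → F)) :
    hkEquiv F n k (fun i => hkT (x i)) = AdjoinRoot.root (X ^ k : F[X]) • hkEquiv F n k x := by
  funext s; cases s <;> simp [hkEquiv, hkT, coords_hkShift]

variable {k} in
theorem topCoeff_hkEquiv_dotProduct (hk : 0 < k) (x y : Fin n → (Fin k → F) × (Fin k → F)) :
    topCoeff F hk (hkEquiv F n k x ⬝ᵥ (J (Fin n) _ *ᵥ hkEquiv F n k y)) =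
      ∑ i, hkForm (x i) (y i) := by
  simp [dotProduct_J_mulVec, hkEquiv, hkForm, topCoeff_coords_mul_coords]

end HomogeneousModule

theorem spMap_surjective_of_leftInverse {l R S : Type*} [DecidableEq l] [Fintype l] [CommRing R]
    [CommRing S] {f : R →+* S} {g : S →+* R} (hfg : Function.LeftInverse f g) :
    Function.Surjective (spMap (l := l) f) :=
  fun A => ⟨spMap g A, Subtype.ext <| Matrix.ext fun i j => hfg (A.1 i j)⟩

theorem leftInverse_evalZeroQuot_algebraMap (F : Type*) [Field F] {k : ℕ} (hk : 0 < k) :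
    Function.LeftInverse (evalZeroQuot F k hk) (algebraMap F _) := fun a => by
  rw [← Ideal.Quotient.mk_algebraMap, evalZeroQuot, Ideal.Quotient.lift_mk]
  simp

theorem sp_homogeneous_snt_iso_symplectic_general {F : Type*} [Field F]
    (n k : ℕ) (hk : 0 < k) :
    ∃ iso : (sntSp F (Fin n → (Fin k → F) × (Fin k → F))
        (fun x y => ∑ i, hkForm (x i) (y i)) (fun x i => hkT (x i))) ≃*
        Matrix.symplecticGroup (Fin n) (Polynomial F ⧸ Ideal.span {(Polynomial.X : Polynomial F) ^ k}),
      Function.Surjective ((spMap (evalZeroQuot F k hk)).comp iso.toMonoidHom) := by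
  refine ⟨(sntSp.congr (hkEquiv F n k) (topCoeff_hkEquiv_dotProduct F n hk)
    (hkEquiv_hkT F n k)).trans (symplecticGroupEquivSntSp (Fin n) AdjoinRoot.adjoinRoot_eq_top
      (topCoeff_mul_nondegenerate F hk)).symm, ?_⟩
  exact (spMap_surjective_of_leftInverse (leftInverse_evalZeroQuot_algebraMap F hk)).comp
    (MulEquiv.surjective _)

/-- For the homogeneous snt-module `M = H_k ⊕ ⋯ ⊕ H_k`
(`n` copies), the group `Sp(M,t)` is isomorphic to `Sp_{2n}(F[t]/(t^k))`;
in particular, reduction modulo `t` induces a surjective group homomorphism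
`π₀ : Sp(M,t) → Sp_{2n}(F)`. -/
theorem sp_homogeneous_snt_iso_symplectic {F : Type*} [Field F] [CharZero F]
    (n k : ℕ) (hk : 0 < k) :
    ∃ iso : (sntSp F (Fin n → (Fin k → F) × (Fin k → F))
        (fun x y => ∑ i, hkForm (x i) (y i)) (fun x i => hkT (x i))) ≃*
        Matrix.symplecticGroup (Fin n) (Polynomial F ⧸ Ideal.span {(Polynomial.X : Polynomial F) ^ k}),
      Function.Surjective ((spMap (evalZeroQuot F k hk)).comp iso.toMonoidHom) :=
  sp_homogeneous_snt_iso_symplectic_general n k hk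
end

section
/- Let M = M(l_1) ⊕ ⋯ ⊕ M(l_s) with l_1 > ⋯ > l_s be the decomposition of an snt-module into its homogeneous pieces, and let σ ∈ Sp(M,t) with components σ_j^i : M(l_i) → M(l_j). Then: (a) for all i < j and every v ∈ M(l_j), the component σ_i^j(v) lies in t^{l_i−l_j}·M(l_i); consequently the induced map M̄(l_j) → M̄(l_i) on the quotients modulo t is zero, so the induced block matrix of σ on M̄ = M/tM is block upper triangular; and (b) for each i, the induced map σ̄_i^i : M̄(l_i) → M̄(l_i) is a symplectic automorphism for the form ⟨ā, b̄⟩_i := ⟨a, t^{l_i−1}·b⟩. -/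
/-- The homogeneous piece `M(l) = H_l ⊕ ⋯ ⊕ H_l` (`r` copies), in coordinates. -/
abbrev HomPiece (F : Type*) [Field F] (l r : ℕ) := Fin r → (Fin l → F) × (Fin l → F)

/-- `t` acting on a homogeneous piece. -/
def tPiece {F : Type*} [Field F] {l r : ℕ} (v : HomPiece F l r) : HomPiece F l r :=
  fun a => hkT (v a)

/-- The snt-module `M = M(l_1) ⊕ ⋯ ⊕ M(l_s)` in coordinates, where `M(l_i)` consists
of `r i` copies of `H_{l i}`. -/
abbrev SntSum (F : Type*) [Field F] {s : ℕ} (l r : Fin s → ℕ) :=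
  (i : Fin s) → HomPiece F (l i) (r i)

/-- The symplectic form on `M = M(l_1) ⊕ ⋯ ⊕ M(l_s)`. -/
def sumForm {F : Type*} [Field F] {s : ℕ} {l r : Fin s → ℕ} (x y : SntSum F l r) : F :=
  ∑ i, ∑ a, hkForm (x i a) (y i a)

/-- The action of `t` on `M = M(l_1) ⊕ ⋯ ⊕ M(l_s)`. -/
def sumT {F : Type*} [Field F] {s : ℕ} {l r : Fin s → ℕ} (x : SntSum F l r) :
    SntSum F l r := fun i => tPiece (x i)

/-- The block component `σ_j^i : M(l_i) → M(l_j)` of an endomorphism `σ` of `M`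
(with the paper's indexing: `blockComp σ j i` maps the `i`-th piece to the `j`-th). -/
def blockComp {F : Type*} [Field F] {s : ℕ} {l r : Fin s → ℕ}
    (σ : SntSum F l r ≃ₗ[F] SntSum F l r) (j i : Fin s) (v : HomPiece F (l i) (r i)) :
    HomPiece F (l j) (r j) :=
  σ (Pi.single i v) j

/-- Reduction modulo `t` of a homogeneous piece: the constant coefficients. -/
def coeff0 {F : Type*} [Field F] {l r : ℕ} (h : 0 < l) (v : HomPiece F l r) :
    Fin r → F × F :=
  fun a => ((v a).1 ⟨0, h⟩, (v a).2 ⟨0, h⟩)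

/-- The canonical lift of an element of `M(l)/t·M(l)` to `M(l)` (constant coefficients). -/
def embed0 {F : Type*} [Field F] {l r : ℕ} (v : Fin r → F × F) : HomPiece F l r :=
  fun a => (fun m => if (m : ℕ) = 0 then (v a).1 else 0,
    fun m => if (m : ℕ) = 0 then (v a).2 else 0)

/-- The nondegenerate alternating form `⟨ā, b̄⟩ := ⟨a, t^{l-1}·b⟩` on `M(l)/t·M(l)`,
computed with the canonical lifts. -/
def barForm {F : Type*} [Field F] (l : ℕ) {r : ℕ} (v w : Fin r → F × F) : F :=
  ∑ a, hkForm (embed0 (l := l) v a) ((hkT^[l - 1]) (embed0 (l := l) w a))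

/-- The map `σ̄_i^i` induced on `M(l_i)/t·M(l_i)` by the diagonal block of `σ`. -/
def barMap {F : Type*} [Field F] {s : ℕ} {l r : Fin s → ℕ}
    (σ : SntSum F l r ≃ₗ[F] SntSum F l r) (i : Fin s) (h : 0 < l i)
    (v : Fin (r i) → F × F) : Fin (r i) → F × F :=
  coeff0 h (blockComp σ i i (embed0 v))

/-!
Two coordinate facts about `H_k` carry the argument: the kernel of `t^p` is `t^{k-p}·H_k`, and
`⟨x, t^{k-1}·y⟩` only depends on `x` and `y` modulo `t`. Since `σ` commutes with `t`, a block
`σ_j^i` maps `M(l_i)`, which is killed by `t^{l_i}`, into `t^{l_j - l_i}·M(l_j)`, and maps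
`t·M(l_i)` into `t·M(l_j)`. So `σ_j^i` vanishes modulo `t` when `l_i < l_j`, and for `k ≠ i`
one of the two factors of `σ_i^k ∘ τ_k^i` does; hence reducing diagonal blocks modulo `t` is
multiplicative, and `σ⁻¹` provides the inverse of `σ̄_i^i`. For `x, y ∈ M(l_i)` the form
`⟨σx, t^{l_i-1}·σy⟩` is the sum over the components of `σx, σy`, in which only the `i`-th survives.
-/

section Hk

variable {F : Type*} [Field F] {k : ℕ}

lemma hkShift_iterate_apply (m : ℕ) (a : Fin k → F) (i : Fin k) :
    (hkShift^[m] a) i = if h : m ≤ i then a ⟨i - m, by omega⟩ else 0 := by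
  induction m generalizing i with
  | zero => simp
  | succ n ih =>
    rw [Function.iterate_succ_apply', hkShift]
    by_cases h0 : (i : ℕ) = 0
    · simp [h0]
    · rw [dif_neg h0, ih]
      simp only
      split_ifs <;> first | rfl | omega | (congr 2; omega)

lemma hkShift_iterate_eq_zero {m : ℕ} (h : k ≤ m) (a : Fin k → F) : hkShift^[m] a = 0 := by
  funext i
  rw [hkShift_iterate_apply, dif_neg (by omega), Pi.zero_apply]

lemma hkShift_iterate_pred_apply (hk : 0 < k) (a : Fin k → F) (i : Fin k) :
    (hkShift^[k - 1] a) i = if (i : ℕ) = k - 1 then a ⟨0, hk⟩ else 0 := by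
  rw [hkShift_iterate_apply]
  split_ifs <;> first | omega | rfl | (congr 2; omega)

lemma exists_hkShift_iterate_eq_of_iterate_eq_zero {p : ℕ} {a : Fin k → F}
    (h : hkShift^[p] a = 0) : ∃ b : Fin k → F, a = hkShift^[k - p] b := by
  refine ⟨fun j => if hj : j + (k - p) < k then a ⟨j + (k - p), hj⟩ else 0, funext fun i => ?_⟩
  rw [hkShift_iterate_apply]
  split_ifs with hi hi'
  · congr 1; ext; simp only; omega
  · simp only at hi'; omega
  · have hip := congrFun h ⟨i + p, by omega⟩
    rw [hkShift_iterate_apply, dif_pos (by simp)] at hip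
    simpa using hip

lemma hkT_iterate (m : ℕ) (x : (Fin k → F) × (Fin k → F)) :
    hkT^[m] x = (hkShift^[m] x.1, hkShift^[m] x.2) := by
  induction m generalizing x with
  | zero => rfl
  | succ n ih => rw [Function.iterate_succ_apply, ih, Function.iterate_succ_apply,
      Function.iterate_succ_apply]; rfl

lemma hkT_iterate_eq_zero {m : ℕ} (h : k ≤ m) (x : (Fin k → F) × (Fin k → F)) :
    hkT^[m] x = 0 := by
  rw [hkT_iterate, hkShift_iterate_eq_zero h, hkShift_iterate_eq_zero h]; rfl

lemma hkForm_hkT_iterate_pred (hk : 0 < k) (x y : (Fin k → F) × (Fin k → F)) :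
    hkForm x (hkT^[k - 1] y) = x.1 ⟨0, hk⟩ * y.2 ⟨0, hk⟩ - y.1 ⟨0, hk⟩ * x.2 ⟨0, hk⟩ := by
  have hrev : ∀ i : Fin k, ((Fin.rev i : ℕ) = k - 1 ↔ ⟨0, hk⟩ = i) := fun i => by
    rw [Fin.val_rev, Fin.ext_iff]; simp only; omega
  have hlast : ∀ i : Fin k, ((i : ℕ) = k - 1 ↔ Fin.rev ⟨0, hk⟩ = i) := fun i => by
    rw [Fin.ext_iff, Fin.val_rev]; simp only; omega
  simp only [hkForm, hkT_iterate, hkShift_iterate_pred_apply hk, hrev, hlast, mul_ite, ite_mul,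
    mul_zero, zero_mul, Finset.sum_ite_eq, Finset.mem_univ, if_true, Fin.rev_rev]

end Hk

section HomPiece

variable {F : Type*} [Field F] {l r : ℕ}

lemma tPiece_iterate_apply (m : ℕ) (v : HomPiece F l r) (a : Fin r) :
    ((tPiece (F := F))^[m] v) a = hkT^[m] (v a) := by
  induction m generalizing v with
  | zero => rfl
  | succ n ih => rw [Function.iterate_succ_apply, ih, Function.iterate_succ_apply]; rfl

lemma tPiece_zero : tPiece (0 : HomPiece F l r) = 0 := by
  funext a
  ext i <;> simp [tPiece, hkT, hkShift]

lemma tPiece_iterate_eq_zero {m : ℕ} (h : l ≤ m) (v : HomPiece F l r) :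
    (tPiece (F := F))^[m] v = 0 := by
  funext a
  rw [tPiece_iterate_apply, hkT_iterate_eq_zero h, Pi.zero_apply]

lemma exists_tPiece_iterate_eq_of_iterate_eq_zero {p : ℕ} {v : HomPiece F l r}
    (h : (tPiece (F := F))^[p] v = 0) : ∃ w, v = (tPiece (F := F))^[l - p] w := by
  have h' a := congrFun h a
  simp only [tPiece_iterate_apply, hkT_iterate, Pi.zero_apply, Prod.ext_iff] at h'
  choose b₁ hb₁ using fun a => exists_hkShift_iterate_eq_of_iterate_eq_zero (h' a).1
  choose b₂ hb₂ using fun a => exists_hkShift_iterate_eq_of_iterate_eq_zero (h' a).2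
  exact ⟨fun a => (b₁ a, b₂ a), funext fun a => by
    rw [tPiece_iterate_apply, hkT_iterate]; exact Prod.ext (hb₁ a) (hb₂ a)⟩

lemma coeff0_sub (h : 0 < l) (v w : HomPiece F l r) :
    coeff0 h (v - w) = coeff0 h v - coeff0 h w := rfl

lemma coeff0_sum (h : 0 < l) {ι : Type*} (t : Finset ι) (v : ι → HomPiece F l r) :
    coeff0 h (∑ k ∈ t, v k) = ∑ k ∈ t, coeff0 h (v k) := by
  funext a
  ext <;> simp [coeff0, Finset.sum_apply, Prod.fst_sum, Prod.snd_sum]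

lemma coeff0_embed0 (h : 0 < l) (v : Fin r → F × F) : coeff0 h (embed0 (l := l) v) = v := by
  funext a
  simp [coeff0, embed0]

lemma coeff0_tPiece_iterate (h : 0 < l) {m : ℕ} (hm : 0 < m) (v : HomPiece F l r) :
    coeff0 h ((tPiece (F := F))^[m] v) = 0 := by
  funext a
  simp only [coeff0, tPiece_iterate_apply, hkT_iterate, hkShift_iterate_apply]
  simp [hm.ne']

lemma exists_tPiece_eq_of_coeff0_eq_zero (h : 0 < l) {v : HomPiece F l r}
    (hv : coeff0 h v = 0) : ∃ w, v = tPiece w := by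
  have hker : (tPiece (F := F))^[l - 1] v = 0 := by
    funext a
    have hva := congrFun hv a
    simp only [coeff0, Pi.zero_apply, Prod.ext_iff] at hva
    simp only [tPiece_iterate_apply, hkT_iterate, Pi.zero_apply, Prod.ext_iff]
    constructor <;> funext i <;> simp [hkShift_iterate_pred_apply h, hva]
  obtain ⟨w, hw⟩ := exists_tPiece_iterate_eq_of_iterate_eq_zero hker
  exact ⟨w, by rwa [show l - (l - 1) = 1 by omega, Function.iterate_one] at hw⟩

lemma sum_hkForm_hkT_iterate_pred (h : 0 < l) (v w : HomPiece F l r) :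
    ∑ a, hkForm (v a) (hkT^[l - 1] (w a)) = barForm l (coeff0 h v) (coeff0 h w) := by
  simp only [barForm, hkForm_hkT_iterate_pred h]
  simp [coeff0, embed0]

end HomPiece

section Blocks

variable {F : Type*} [Field F] {s : ℕ} {l r : Fin s → ℕ}

lemma sumT_iterate_apply (m : ℕ) (x : SntSum F l r) (i : Fin s) :
    ((sumT (F := F))^[m] x) i = (tPiece (F := F))^[m] (x i) := by
  induction m generalizing x with
  | zero => rfl
  | succ n ih => rw [Function.iterate_succ_apply, ih, Function.iterate_succ_apply]; rfl

lemma semiconj_single_tPiece_sumT (i : Fin s) :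
    Function.Semiconj (fun v : HomPiece F (l i) (r i) => (Pi.single i v : SntSum F l r))
      tPiece sumT := by
  intro v
  funext k
  rcases eq_or_ne k i with rfl | hk
  · simp [sumT]
  · simp [sumT, Pi.single_eq_of_ne hk, tPiece_zero]

lemma sumForm_sumT_iterate (m : ℕ) (x y : SntSum F l r) :
    sumForm x ((sumT (F := F))^[m] y) = ∑ k, ∑ a, hkForm (x k a) (hkT^[m] (y k a)) := by
  simp only [sumForm, sumT_iterate_apply, tPiece_iterate_apply]

lemma sumForm_single (i : Fin s) (u u' : HomPiece F (l i) (r i)) :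
    sumForm (Pi.single i u : SntSum F l r) (Pi.single i u') = ∑ a, hkForm (u a) (u' a) := by
  rw [sumForm, Fintype.sum_eq_single i fun k hk => by simp [Pi.single_eq_of_ne hk, hkForm]]
  simp

lemma blockComp_zero (σ : SntSum F l r ≃ₗ[F] SntSum F l r) (j i : Fin s) :
    blockComp σ j i 0 = 0 := by
  simp [blockComp]

lemma blockComp_sub (σ : SntSum F l r ≃ₗ[F] SntSum F l r) (j i : Fin s)
    (v v' : HomPiece F (l i) (r i)) :
    blockComp σ j i (v - v') = blockComp σ j i v - blockComp σ j i v' := by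
  simp [blockComp, Pi.single_sub]

lemma blockComp_mul (σ τ : SntSum F l r ≃ₗ[F] SntSum F l r) (j i : Fin s)
    (v : HomPiece F (l i) (r i)) :
    blockComp (σ * τ) j i v = ∑ k, blockComp σ j k (blockComp τ k i v) := by
  rw [blockComp, LinearEquiv.mul_apply, ← Finset.univ_sum_single (τ (Pi.single i v)), map_sum,
    Finset.sum_apply]
  rfl

lemma blockComp_one (i : Fin s) (v : HomPiece F (l i) (r i)) : blockComp 1 i i v = v := by
  simp [blockComp]

variable {σ : SntSum F l r ≃ₗ[F] SntSum F l r}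

lemma blockComp_tPiece_iterate (hσ : Function.Commute σ sumT) (j i : Fin s) (m : ℕ)
    (v : HomPiece F (l i) (r i)) :
    blockComp σ j i ((tPiece (F := F))^[m] v) = (tPiece (F := F))^[m] (blockComp σ j i v) := by
  rw [blockComp, ((semiconj_single_tPiece_sumT i).iterate_right m).eq, (hσ.iterate_right m).eq,
    sumT_iterate_apply, blockComp]

lemma exists_blockComp_eq_tPiece_iterate (hσ : Function.Commute σ sumT) (j i : Fin s)
    (v : HomPiece F (l i) (r i)) :
    ∃ w, blockComp σ j i v = (tPiece (F := F))^[l j - l i] w := by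
  apply exists_tPiece_iterate_eq_of_iterate_eq_zero (p := l i)
  rw [← blockComp_tPiece_iterate hσ, tPiece_iterate_eq_zero le_rfl, blockComp_zero]

end Blocks

section Reduction

variable {F : Type*} [Field F] {s : ℕ} {l r : Fin s → ℕ} {σ τ : SntSum F l r ≃ₗ[F] SntSum F l r}

lemma coeff0_blockComp_eq_zero_of_lt (hσ : Function.Commute σ sumT) {j i : Fin s}
    (hj : 0 < l j) (hij : l i < l j) (v : HomPiece F (l i) (r i)) :
    coeff0 hj (blockComp σ j i v) = 0 := by
  obtain ⟨w, hw⟩ := exists_blockComp_eq_tPiece_iterate hσ j i v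
  rw [hw, coeff0_tPiece_iterate hj (by omega)]

lemma coeff0_blockComp_congr (hσ : Function.Commute σ sumT) {j i : Fin s} (hj : 0 < l j)
    (hi : 0 < l i) {v v' : HomPiece F (l i) (r i)} (h : coeff0 hi v = coeff0 hi v') :
    coeff0 hj (blockComp σ j i v) = coeff0 hj (blockComp σ j i v') := by
  obtain ⟨w, hw⟩ := exists_tPiece_eq_of_coeff0_eq_zero hi (v := v - v') (by
    rw [coeff0_sub, h, sub_self])
  rw [← sub_eq_zero, ← coeff0_sub, ← blockComp_sub, hw,
    ← Function.iterate_one (tPiece (F := F)), blockComp_tPiece_iterate hσ,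
    coeff0_tPiece_iterate hj one_pos]

lemma coeff0_blockComp_blockComp_eq_zero (hσ : Function.Commute σ sumT)
    (hτ : Function.Commute τ sumT) {k i : Fin s} (hi : 0 < l i) (hki : l k ≠ l i)
    (v : HomPiece F (l i) (r i)) :
    coeff0 hi (blockComp σ i k (blockComp τ k i v)) = 0 := by
  rcases hki.lt_or_gt with hlt | hgt
  · exact coeff0_blockComp_eq_zero_of_lt hσ hi hlt _
  · obtain ⟨w, hw⟩ := exists_blockComp_eq_tPiece_iterate hτ k i v
    rw [hw, blockComp_tPiece_iterate hσ, coeff0_tPiece_iterate hi (Nat.sub_pos_of_lt hgt)]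

lemma barMap_mul (hl : Function.Injective l) (hσ : Function.Commute σ sumT)
    (hτ : Function.Commute τ sumT) (i : Fin s) (hi : 0 < l i) :
    barMap (σ * τ) i hi = barMap σ i hi ∘ barMap τ i hi := by
  funext v
  rw [barMap, blockComp_mul, coeff0_sum, Fintype.sum_eq_single i fun k hk =>
    coeff0_blockComp_blockComp_eq_zero hσ hτ hi (hl.ne hk) _]
  exact coeff0_blockComp_congr hσ hi hi (coeff0_embed0 hi _).symm

lemma barMap_one (i : Fin s) (hi : 0 < l i) : barMap (1 : SntSum F l r ≃ₗ[F] _) i hi = id := by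
  funext v
  rw [barMap, blockComp_one, coeff0_embed0, id]

lemma bijective_barMap (hl : Function.Injective l) (hσ : Function.Commute σ sumT) (i : Fin s)
    (hi : 0 < l i) : Function.Bijective (barMap σ i hi) := by
  have hσ' : Function.Commute ⇑(σ⁻¹) sumT := fun x => σ.injective <| by
    show σ (σ.symm (sumT x)) = σ (sumT (σ.symm x))
    rw [hσ, σ.apply_symm_apply, σ.apply_symm_apply]
  refine Function.bijective_iff_has_inverse.mpr ⟨barMap σ⁻¹ i hi, fun v => ?_, fun v => ?_⟩
  · rw [← Function.comp_apply (f := barMap σ⁻¹ i hi), ← barMap_mul hl hσ' hσ, inv_mul_cancel,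
      barMap_one, id]
  · rw [← Function.comp_apply (f := barMap σ i hi), ← barMap_mul hl hσ hσ', mul_inv_cancel,
      barMap_one, id]

end Reduction

section Form

variable {F : Type*} [Field F] {s : ℕ} {l r : Fin s → ℕ} {σ : SntSum F l r ≃ₗ[F] SntSum F l r}

/-- For `l_k < l_i` the factor `t^{l_i - 1}` kills `M(l_k)`; for `l_k > l_i` both components lie
in `t·M(l_k)`, on which `⟨·, t^{l_k - 1}·⟩` vanishes. -/
lemma sum_hkForm_blockComp_eq_zero (hσ : Function.Commute σ sumT) {k i : Fin s}
    (hi : 0 < l i) (hki : l k ≠ l i) (u u' : HomPiece F (l i) (r i)) :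
    ∑ a, hkForm (blockComp σ k i u a) (hkT^[l i - 1] (blockComp σ k i u' a)) = 0 := by
  rcases hki.lt_or_gt with hlt | hgt
  · simp [hkT_iterate_eq_zero (show l k ≤ l i - 1 by omega), hkForm]
  · have hk : 0 < l k := hi.trans hgt
    obtain ⟨w, hw⟩ := exists_blockComp_eq_tPiece_iterate hσ k i u'
    simp only [hw, tPiece_iterate_apply, ← Function.iterate_add_apply,
      show l i - 1 + (l k - l i) = l k - 1 by omega]
    rw [sum_hkForm_hkT_iterate_pred hk, coeff0_blockComp_eq_zero_of_lt hσ hk hgt]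
    simp [barForm, embed0, hkForm]

lemma barForm_barMap (hl : Function.Injective l)
    (hσ : σ ∈ sntSp F (SntSum F l r) sumForm sumT) (i : Fin s) (hi : 0 < l i)
    (v w : Fin (r i) → F × F) :
    barForm (l i) (barMap σ i hi v) (barMap σ i hi w) = barForm (l i) v w := by
  have hσt : Function.Commute σ sumT := hσ.2
  calc barForm (l i) (barMap σ i hi v) (barMap σ i hi w)
      = ∑ k, ∑ a, hkForm (blockComp σ k i (embed0 v) a)
          (hkT^[l i - 1] (blockComp σ k i (embed0 w) a)) := by
        rw [Fintype.sum_eq_single i fun k hk => sum_hkForm_blockComp_eq_zero hσt hi (hl.ne hk) _ _]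
        exact (sum_hkForm_hkT_iterate_pred hi _ _).symm
    _ = sumForm (σ (Pi.single i (embed0 v)))
          (σ ((sumT (F := F))^[l i - 1] (Pi.single i (embed0 w)))) := by
        rw [(hσt.iterate_right _).eq, sumForm_sumT_iterate]
        rfl
    _ = sumForm (Pi.single i (embed0 v)) ((sumT (F := F))^[l i - 1] (Pi.single i (embed0 w))) :=
        hσ.1 _ _
    _ = barForm (l i) v w := by
        rw [← ((semiconj_single_tPiece_sumT i).iterate_right _).eq, sumForm_single]
        simp only [tPiece_iterate_apply]
        rw [sum_hkForm_hkT_iterate_pred hi, coeff0_embed0, coeff0_embed0]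

end Form

theorem snt_block_triangular_general {F : Type*} [Field F] {s : ℕ}
    (l r : Fin s → ℕ) (hl0 : ∀ i, 0 < l i)
    (hlt : ∀ i j : Fin s, i < j → l j < l i)
    (σ : SntSum F l r ≃ₗ[F] SntSum F l r)
    (hσ : σ ∈ sntSp F (SntSum F l r) sumForm sumT) :
    (∀ i j : Fin s, i < j → ∀ v : HomPiece F (l j) (r j),
      ∃ w : HomPiece F (l i) (r i),
        blockComp σ i j v = (tPiece (F := F) (l := l i) (r := r i))^[l i - l j] w) ∧
    (∀ i j : Fin s, i < j → ∀ v : HomPiece F (l j) (r j),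
      coeff0 (hl0 i) (blockComp σ i j v) = 0) ∧
    (∀ i : Fin s,
      (∀ v v' : HomPiece F (l i) (r i), coeff0 (hl0 i) v = coeff0 (hl0 i) v' →
        coeff0 (hl0 i) (blockComp σ i i v) = coeff0 (hl0 i) (blockComp σ i i v')) ∧
      (∀ v w : Fin (r i) → F × F,
        barForm (l i) (barMap σ i (hl0 i) v) (barMap σ i (hl0 i) w) = barForm (l i) v w) ∧
      Function.Bijective (barMap σ i (hl0 i))) := by
  have hl : Function.Injective l := StrictAnti.injective fun i j => hlt i j
  exact ⟨fun i j _ v => exists_blockComp_eq_tPiece_iterate hσ.2 i j v,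
    fun i j hij v => coeff0_blockComp_eq_zero_of_lt hσ.2 (hl0 i) (hlt i j hij) v,
    fun i => ⟨fun _ _ h => coeff0_blockComp_congr hσ.2 (hl0 i) (hl0 i) h,
      barForm_barMap hl hσ i (hl0 i), bijective_barMap hl hσ.2 i (hl0 i)⟩⟩

/-- For `σ ∈ Sp(M,t)` with `M = M(l_1) ⊕ ⋯ ⊕ M(l_s)`,
`l_1 > ⋯ > l_s`: (a) for `i < j` the component `σ_i^j` takes values in
`t^{l_i - l_j}·M(l_i)`, so the induced block matrix modulo `t` is block upper
triangular; (b) each diagonal block descends to the quotient modulo `t` and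
induces a symplectic automorphism `σ̄_i^i` of `(M̄(l_i), ⟨·,·⟩_i)`. -/
theorem snt_block_triangular {F : Type*} [Field F] [CharZero F] {s : ℕ}
    (l r : Fin s → ℕ) (hl0 : ∀ i, 0 < l i)
    (hlt : ∀ i j : Fin s, i < j → l j < l i)
    (σ : SntSum F l r ≃ₗ[F] SntSum F l r)
    (hσ : σ ∈ sntSp F (SntSum F l r) sumForm sumT) :
    (∀ i j : Fin s, i < j → ∀ v : HomPiece F (l j) (r j),
      ∃ w : HomPiece F (l i) (r i),
        blockComp σ i j v = (tPiece (F := F) (l := l i) (r := r i))^[l i - l j] w) ∧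
    (∀ i j : Fin s, i < j → ∀ v : HomPiece F (l j) (r j),
      coeff0 (hl0 i) (blockComp σ i j v) = 0) ∧
    (∀ i : Fin s,
      (∀ v v' : HomPiece F (l i) (r i), coeff0 (hl0 i) v = coeff0 (hl0 i) v' →
        coeff0 (hl0 i) (blockComp σ i i v) = coeff0 (hl0 i) (blockComp σ i i v')) ∧
      (∀ v w : Fin (r i) → F × F,
        barForm (l i) (barMap σ i (hl0 i) v) (barMap σ i (hl0 i) w) = barForm (l i) v w) ∧
      Function.Bijective (barMap σ i (hl0 i))) :=
  snt_block_triangular_general l r hl0 hlt σ hσ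
end

section
/- Let M be an snt-module with a fixed decomposition M = M_- ⊕ M_+ into t-stable Lagrangian subspaces, and let W ⊆ M_- be a t-stable subspace. Then for every U ∈ P_W the map ρ_U : W → M_+/W^⊥ is F[[t]]-linear and self-dual; conversely, for every F[[t]]-linear self-dual map ρ : W → M_+/W^⊥ there is a unique U ∈ P_W with ρ_U = ρ. Hence U ↦ ρ_U is a bijection from P_W onto F_W. -/
/-!
Write elements of `M` as `w + m` with `w ∈ M₋`, `m ∈ M₊`. If `U` is Lagrangian with `π₋(U) = W`,
then `U = U^⊥` forces `U ∩ M₊ = W^⊥`, so the `M₊`-component of an element of `U` over `w ∈ W` is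
determined modulo `W^⊥`: `U` is the graph of a map `ρ : W → M₊/W^⊥`. Since `M₋` and `M₊` are
isotropic, `⟨w + m, w' + m'⟩ = ⟨w, m'⟩ - ⟨w', m⟩`, so the graph is isotropic exactly when `ρ` is
self-dual, and it is `t`-stable exactly when `ρ` commutes with `t`. Conversely the graph of a
self-dual `ρ` is Lagrangian: if `a + b` is orthogonal to it, then `a` is orthogonal to `W^⊥`,
hence lies in `W`, and self-duality gives `[b] = ρ a`.
-/

variable {F M : Type*} [Field F] [AddCommGroup M] [Module F M]

/-- A Lagrangian subspace: isotropic of dimension `(dim M)/2`. -/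
def IsLagrangian (B : M →ₗ[F] M →ₗ[F] F) (U : Submodule F M) : Prop :=
  (∀ x ∈ U, ∀ y ∈ U, B x y = 0) ∧ 2 * Module.finrank F U = Module.finrank F M

/-- `π₋(U) = W`: the projection of `U` along `M₊` is exactly `W` (stated without
constructing the projection: every `u ∈ U` differs from some `w ∈ W` by an element
of `M₊`, and conversely). -/
def ProjEq (Mp : Submodule F M) (U W : Submodule F M) : Prop :=
  (∀ u ∈ U, ∃ w ∈ W, u - w ∈ Mp) ∧ (∀ w ∈ W, ∃ u ∈ U, u - w ∈ Mp)

/-- `W^⊥ = {x ∈ M₊ | ⟨w, x⟩ = 0 for all w ∈ W}`, as a submodule of `M₊`. -/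
def perpIn (B : M →ₗ[F] M →ₗ[F] F) (Mp W : Submodule F M) : Submodule F Mp where
  carrier := {x | ∀ w ∈ W, B w (x : M) = 0}
  zero_mem' := by intro w hw; simp
  add_mem' := by
    intro x y hx hy w hw
    simp only [Submodule.coe_add, map_add]
    rw [hx w hw, hy w hw, add_zero]
  smul_mem' := by
    intro c x hx w hw
    simp only [Submodule.coe_smul, map_smul]
    rw [hx w hw, smul_zero]

/-- Self-duality of `ρ : W → M₊/W^⊥`, expressed via arbitrary lifts:
`⟨w, ρ w'⟩ = ⟨w', ρ w⟩`. -/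
def SelfDualMap (B : M →ₗ[F] M →ₗ[F] F) (Mp W : Submodule F M)
    (ρ : W →ₗ[F] (Mp ⧸ perpIn B Mp W)) : Prop :=
  ∀ (w w' : W) (m m' : Mp), Submodule.Quotient.mk m = ρ w' →
    Submodule.Quotient.mk m' = ρ w → B w (m : M) = B w' (m' : M)

/-- `ρ = ρ_U`: `U` is the graph `{w + m | w ∈ W, m ∈ M₊, [m] = ρ(w)}`. -/
def Corresponds (B : M →ₗ[F] M →ₗ[F] F) (Mp W : Submodule F M) (U : Submodule F M)
    (ρ : W →ₗ[F] (Mp ⧸ perpIn B Mp W)) : Prop :=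
  ∀ x : M, x ∈ U ↔ ∃ w : W, ∃ m : Mp,
    x = (w : M) + (m : M) ∧ Submodule.Quotient.mk m = ρ w

/-- `F[[t]]`-linearity of `ρ : W → M₊/W^⊥` (commutation with `t`), expressed via lifts:
whenever `[m] = ρ(w)`, also `[t·m] = ρ(t·w)`. -/
def TLinearMapTo (B : M →ₗ[F] M →ₗ[F] F) (t : M →ₗ[F] M) (Mp W : Submodule F M)
    (htW : ∀ x ∈ W, t x ∈ W) (htMp : ∀ x ∈ Mp, t x ∈ Mp)
    (ρ : W →ₗ[F] (Mp ⧸ perpIn B Mp W)) : Prop :=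
  ∀ (w : W) (m : Mp), Submodule.Quotient.mk m = ρ w →
    Submodule.Quotient.mk (⟨t (m : M), htMp _ m.2⟩ : Mp) = ρ ⟨t (w : M), htW _ w.2⟩

section Graph

variable {B : M →ₗ[F] M →ₗ[F] F} {Mm Mp W U : Submodule F M}

lemma isLagrangian_iff_orthogonal_eq [FiniteDimensional F M] (hnd : B.Nondegenerate) :
    IsLagrangian B U ↔ LinearMap.BilinForm.orthogonal B U = U := by
  have hdim := LinearMap.BilinForm.finrank_orthogonal hnd U
  have hle := Submodule.finrank_le U
  constructor
  · rintro ⟨hiso, hrank⟩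
    refine (Submodule.eq_of_le_of_finrank_le (fun x hx ↦
      LinearMap.BilinForm.mem_orthogonal_iff.2 fun y hy ↦ hiso y hy x hx) ?_).symm
    omega
  · intro hU
    refine ⟨fun x hx y hy ↦ ?_, by rw [hU] at hdim; omega⟩
    rw [← hU] at hy
    exact LinearMap.BilinForm.mem_orthogonal_iff.1 hy x hx

lemma apply_add_add_of_isotropic (halt : B.IsAlt)
    (hMm : ∀ x ∈ Mm, ∀ y ∈ Mm, B x y = 0) (hMp : ∀ x ∈ Mp, ∀ y ∈ Mp, B x y = 0)
    {w w' m m' : M} (hw : w ∈ Mm) (hw' : w' ∈ Mm) (hm : m ∈ Mp) (hm' : m' ∈ Mp) :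
    B (w + m) (w' + m') = B w m' - B w' m := by
  have hskew := halt.neg w' m
  simp only [map_add, LinearMap.add_apply, hMm w hw w' hw', hMp m hm m' hm']
  linear_combination -hskew

lemma mem_of_forall_perpIn [FiniteDimensional F M] (halt : B.IsAlt) (hnd : B.Nondegenerate)
    (hcod : Codisjoint Mm Mp) (hMm : ∀ x ∈ Mm, ∀ y ∈ Mm, B x y = 0) (hW : W ≤ Mm)
    {a : M} (ha : a ∈ Mm) (h : ∀ p ∈ Mp, (∀ w ∈ W, B w p = 0) → B a p = 0) : a ∈ W := by
  rw [← LinearMap.BilinForm.orthogonal_orthogonal hnd halt.isRefl W,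
    LinearMap.BilinForm.mem_orthogonal_iff]
  intro y hy
  obtain ⟨ym, hym, yp, hyp, rfl⟩ :=
    Submodule.mem_sup.1 (codisjoint_iff.1 hcod ▸ Submodule.mem_top : y ∈ Mm ⊔ Mp)
  have hypW : ∀ w ∈ W, B w yp = 0 := fun w hw ↦ by
    have hwy := LinearMap.BilinForm.mem_orthogonal_iff.1 hy w hw
    rwa [map_add, hMm w (hW hw) ym hym, zero_add] at hwy
  rw [halt.isRefl.eq_iff, map_add, hMm a ha ym hym, h yp hyp hypW, add_zero]

def graph (ρ : W →ₗ[F] (Mp ⧸ perpIn B Mp W)) : Submodule F M where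
  carrier := {x | ∃ w : W, ∃ m : Mp, x = (w : M) + (m : M) ∧ Submodule.Quotient.mk m = ρ w}
  zero_mem' := ⟨0, 0, by simp, by simp⟩
  add_mem' := by
    rintro x y ⟨w, m, rfl, hm⟩ ⟨w', m', rfl, hm'⟩
    refine ⟨w + w', m + m', by push_cast; abel, ?_⟩
    rw [map_add, ← hm, ← hm']
    rfl
  smul_mem' := by
    rintro c x ⟨w, m, rfl, hm⟩
    refine ⟨c • w, c • m, by push_cast; module, ?_⟩
    rw [map_smul, ← hm]
    rfl

variable {ρ : W →ₗ[F] (Mp ⧸ perpIn B Mp W)}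

lemma corresponds_graph : Corresponds B Mp W (graph ρ) ρ := fun _ ↦ Iff.rfl

lemma Corresponds.eq_graph (h : Corresponds B Mp W U ρ) : U = graph ρ := SetLike.ext h

lemma add_mem_graph_iff (hWp : Disjoint W Mp) (w : W) (m : Mp) :
    (w : M) + m ∈ graph ρ ↔ Submodule.Quotient.mk m = ρ w := by
  refine ⟨?_, fun h ↦ ⟨w, m, rfl, h⟩⟩
  rintro ⟨w', m', hsum, hm'⟩
  have hdiff : (w : M) - w' = m' - m := by rw [sub_eq_sub_iff_add_eq_add, hsum, add_comm]
  have hw : (w : M) - w' = 0 :=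
    Submodule.disjoint_def.1 hWp _ (sub_mem w.2 w'.2) (hdiff ▸ sub_mem m'.2 m.2)
  obtain rfl : w = w' := Subtype.ext (sub_eq_zero.1 hw)
  obtain rfl : m = m' := Subtype.ext (add_left_cancel hsum)
  exact hm'

lemma graph_injective (hWp : Disjoint W Mp) :
    Function.Injective (graph : (W →ₗ[F] (Mp ⧸ perpIn B Mp W)) → Submodule F M) := by
  intro ρ ρ' h
  ext w
  obtain ⟨m, hm⟩ := Submodule.Quotient.mk_surjective _ (ρ w)
  rw [← hm, ← add_mem_graph_iff hWp, ← h, add_mem_graph_iff hWp, hm]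

lemma projEq_graph : ProjEq Mp (graph ρ) W := by
  refine ⟨?_, fun w hw ↦ ?_⟩
  · rintro u ⟨w, m, rfl, -⟩
    exact ⟨w, w.2, by simp⟩
  · obtain ⟨m, hm⟩ := Submodule.Quotient.mk_surjective _ (ρ ⟨w, hw⟩)
    exact ⟨w + m, ⟨⟨w, hw⟩, m, rfl, hm⟩, by simp⟩

lemma mem_graph_of_mem_perpIn {m : Mp} (hm : m ∈ perpIn B Mp W) : (m : M) ∈ graph ρ :=
  ⟨0, m, by simp, by rw [map_zero, Submodule.Quotient.mk_eq_zero _ |>.2 hm]⟩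

lemma tStable_graph_iff {t : M →ₗ[F] M} (hWp : Disjoint W Mp)
    (htW : ∀ x ∈ W, t x ∈ W) (htMp : ∀ x ∈ Mp, t x ∈ Mp) :
    (∀ x ∈ graph ρ, t x ∈ graph ρ) ↔ TLinearMapTo B t Mp W htW htMp ρ := by
  constructor
  · intro ht w m hm
    have := ht _ ⟨w, m, rfl, hm⟩
    rw [map_add] at this
    exact (add_mem_graph_iff hWp ⟨_, htW _ w.2⟩ ⟨_, htMp _ m.2⟩).1 this
  · rintro ht x ⟨w, m, rfl, hm⟩
    exact ⟨_, _, map_add t _ _, ht w m hm⟩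

lemma isotropic_graph_iff (halt : B.IsAlt)
    (hMm : ∀ x ∈ Mm, ∀ y ∈ Mm, B x y = 0) (hMp : ∀ x ∈ Mp, ∀ y ∈ Mp, B x y = 0)
    (hW : W ≤ Mm) :
    (∀ x ∈ graph ρ, ∀ y ∈ graph ρ, B x y = 0) ↔ SelfDualMap B Mp W ρ := by
  constructor
  · intro hiso w w' m m' hm hm'
    have := hiso _ ⟨w, m', rfl, hm'⟩ _ ⟨w', m, rfl, hm⟩
    rwa [apply_add_add_of_isotropic halt hMm hMp (hW w.2) (hW w'.2) m'.2 m.2, sub_eq_zero]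
      at this
  · rintro hρ _ ⟨w, m, rfl, hm⟩ _ ⟨w', m', rfl, hm'⟩
    rw [apply_add_add_of_isotropic halt hMm hMp (hW w.2) (hW w'.2) m.2 m'.2, sub_eq_zero]
    exact hρ w w' m' m hm' hm

lemma orthogonal_graph_le [FiniteDimensional F M] (halt : B.IsAlt) (hnd : B.Nondegenerate)
    (hcod : Codisjoint Mm Mp) (hMm : ∀ x ∈ Mm, ∀ y ∈ Mm, B x y = 0)
    (hMp : ∀ x ∈ Mp, ∀ y ∈ Mp, B x y = 0) (hW : W ≤ Mm) (hρ : SelfDualMap B Mp W ρ) :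
    LinearMap.BilinForm.orthogonal B (graph ρ) ≤ graph ρ := by
  intro x hx
  have hperp : ∀ u ∈ graph ρ, B u x = 0 := LinearMap.BilinForm.mem_orthogonal_iff.1 hx
  obtain ⟨a, ha, b, hb, rfl⟩ :=
    Submodule.mem_sup.1 (codisjoint_iff.1 hcod ▸ Submodule.mem_top : x ∈ Mm ⊔ Mp)
  have haW : a ∈ W := mem_of_forall_perpIn halt hnd hcod hMm hW ha fun p hp hpW ↦ by
    have := hperp p (mem_graph_of_mem_perpIn (m := ⟨p, hp⟩) hpW)
    rwa [← zero_add p, apply_add_add_of_isotropic halt hMm hMp (zero_mem _) ha hp hb,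
      map_zero, LinearMap.zero_apply, zero_sub, neg_eq_zero] at this
  obtain ⟨m', hm'⟩ := Submodule.Quotient.mk_surjective _ (ρ ⟨a, haW⟩)
  refine ⟨⟨a, haW⟩, ⟨b, hb⟩, rfl, ?_⟩
  rw [← hm', Submodule.Quotient.eq]
  intro w hw
  obtain ⟨m, hm⟩ := Submodule.Quotient.mk_surjective _ (ρ ⟨w, hw⟩)
  have hwx := hperp _ ⟨⟨w, hw⟩, m, rfl, hm⟩
  rw [apply_add_add_of_isotropic halt hMm hMp (hW hw) ha m.2 hb, sub_eq_zero] at hwx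
  have hsd := hρ ⟨w, hw⟩ ⟨a, haW⟩ m' m hm' hm
  simp only [Submodule.coe_sub, map_sub, hwx, hsd, sub_self]

lemma isLagrangian_graph [FiniteDimensional F M] (halt : B.IsAlt) (hnd : B.Nondegenerate)
    (hcod : Codisjoint Mm Mp) (hMm : ∀ x ∈ Mm, ∀ y ∈ Mm, B x y = 0)
    (hMp : ∀ x ∈ Mp, ∀ y ∈ Mp, B x y = 0) (hW : W ≤ Mm) (hρ : SelfDualMap B Mp W ρ) :
    IsLagrangian B (graph ρ) := by
  have hiso := (isotropic_graph_iff halt hMm hMp hW).2 hρ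
  refine (isLagrangian_iff_orthogonal_eq hnd).2 <|
    le_antisymm (orthogonal_graph_le halt hnd hcod hMm hMp hW hρ) fun x hx ↦ ?_
  exact LinearMap.BilinForm.mem_orthogonal_iff.2 fun y hy ↦ hiso y hy x hx

lemma mem_iff_mem_perpIn_of_isLagrangian [FiniteDimensional F M] (hnd : B.Nondegenerate)
    (hMp : ∀ x ∈ Mp, ∀ y ∈ Mp, B x y = 0) (hU : IsLagrangian B U) (hUW : ProjEq Mp U W)
    (m : Mp) : (m : M) ∈ U ↔ m ∈ perpIn B Mp W := by
  constructor
  · intro hm w hw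
    obtain ⟨u, hu, huw⟩ := hUW.2 w hw
    have := hMp _ huw _ m.2
    rwa [map_sub, LinearMap.sub_apply, hU.1 u hu _ hm, zero_sub, neg_eq_zero] at this
  · intro hm
    rw [← (isLagrangian_iff_orthogonal_eq hnd).1 hU, LinearMap.BilinForm.mem_orthogonal_iff]
    intro u hu
    obtain ⟨w, hw, huw⟩ := hUW.1 u hu
    rw [← sub_add_cancel u w, map_add, LinearMap.add_apply, hMp _ huw _ m.2, hm w hw, add_zero]

/-- `ρ` factors `u ↦ [π₊ u]` through `π₋ : U ↠ W`, whose kernel `U ∩ M₊ = W^⊥` it kills. -/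
lemma exists_eq_graph (hcompl : IsCompl Mm Mp) (hW : W ≤ Mm) (hUW : ProjEq Mp U W)
    (hUMp : ∀ m : Mp, (m : M) ∈ U ↔ m ∈ perpIn B Mp W) :
    ∃ ρ : W →ₗ[F] (Mp ⧸ perpIn B Mp W), U = graph ρ := by
  have hπ : ∀ {u w : M}, w ∈ W → u - w ∈ Mp → Mm.projection Mp hcompl u = w := by
    intro u w hw huw
    rw [← sub_add_cancel u w, map_add, Submodule.projection_apply_of_mem_right hcompl huw,
      zero_add, Submodule.projection_apply_of_mem_left hcompl (hW hw)]
  let g : U →ₗ[F] W := ((Mm.projection Mp hcompl).comp U.subtype).codRestrict W fun u ↦ by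
    obtain ⟨w, hw, huw⟩ := hUW.1 u u.2
    simpa [hπ hw huw] using hw
  let f : U →ₗ[F] Mp ⧸ perpIn B Mp W :=
    (perpIn B Mp W).mkQ ∘ₗ (Mp.projectionOnto Mm hcompl.symm).comp U.subtype
  have hg : Function.Surjective g := fun w ↦ by
    obtain ⟨u, hu, huw⟩ := hUW.2 w w.2
    exact ⟨⟨u, hu⟩, Subtype.ext (hπ w.2 huw)⟩
  have hf : ∀ u : U, f u = Submodule.Quotient.mk (Mp.projectionOnto Mm hcompl.symm u) :=
    fun _ ↦ rfl
  have hker : LinearMap.ker g ≤ LinearMap.ker f := fun u hu ↦ by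
    have huMp : (u : M) ∈ Mp :=
      (Submodule.projection_apply_eq_zero_iff hcompl).1 (congrArg Subtype.val hu)
    rw [LinearMap.mem_ker, hf, Submodule.projectionOnto_apply_of_mem_left hcompl.symm huMp,
      Submodule.Quotient.mk_eq_zero]
    exact (hUMp ⟨u, huMp⟩).1 u.2
  let ρ := (LinearMap.ker g).liftQ f hker ∘ₗ (g.quotKerEquivOfSurjective hg).symm.toLinearMap
  have hρ : ∀ u : U, ρ (g u) = f u := fun u ↦ by simp [ρ]
  have hdecomp : ∀ u : U, (g u : M) + Mp.projectionOnto Mm hcompl.symm u = u := fun u ↦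
    Submodule.projection_add_projection_eq_self hcompl u
  refine ⟨ρ, SetLike.ext fun x ↦ ⟨fun hx ↦ ?_, ?_⟩⟩
  · exact ⟨g ⟨x, hx⟩, _, (hdecomp ⟨x, hx⟩).symm, (hρ ⟨x, hx⟩).symm⟩
  · rintro ⟨w, m, rfl, hm⟩
    obtain ⟨u, rfl⟩ := hg w
    rw [hρ, hf, Submodule.Quotient.eq] at hm
    have hmem := U.add_mem u.2 ((hUMp _).2 hm)
    set p := Mp.projectionOnto Mm hcompl.symm u
    rwa [Submodule.coe_sub, ← hdecomp u, add_add_sub_cancel] at hmem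

end Graph

theorem t_lagrangian_graph_bijection_general {F M : Type*} [Field F]
    [AddCommGroup M] [Module F M] [FiniteDimensional F M]
    (B : M →ₗ[F] M →ₗ[F] F) (halt : ∀ x : M, B x x = 0)
    (hnd : ∀ x : M, (∀ y : M, B x y = 0) → x = 0)
    (t : M →ₗ[F] M)
    (Mm Mp : Submodule F M) (hcompl : IsCompl Mm Mp)
    (hMm : IsLagrangian B Mm) (hMp : IsLagrangian B Mp)
    (htMp : ∀ x ∈ Mp, t x ∈ Mp)
    (W : Submodule F M) (hW : W ≤ Mm) (htW : ∀ x ∈ W, t x ∈ W) :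
    (∀ U : Submodule F M, (∀ x ∈ U, t x ∈ U) → IsLagrangian B U → ProjEq Mp U W →
      ∃ ρ : W →ₗ[F] (Mp ⧸ perpIn B Mp W),
        SelfDualMap B Mp W ρ ∧ TLinearMapTo B t Mp W htW htMp ρ ∧
        Corresponds B Mp W U ρ ∧
        ∀ ρ' : W →ₗ[F] (Mp ⧸ perpIn B Mp W), Corresponds B Mp W U ρ' → ρ' = ρ) ∧
    (∀ ρ : W →ₗ[F] (Mp ⧸ perpIn B Mp W),
      SelfDualMap B Mp W ρ → TLinearMapTo B t Mp W htW htMp ρ →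
      ∃! U : Submodule F M, ((∀ x ∈ U, t x ∈ U) ∧ IsLagrangian B U ∧ ProjEq Mp U W) ∧
        Corresponds B Mp W U ρ) := by
  have halt' : B.IsAlt := halt
  have hnd' : B.Nondegenerate := halt'.isRefl.nondegenerate_iff_separatingLeft.2 hnd
  have hWp : Disjoint W Mp := hcompl.disjoint.mono_left hW
  constructor
  · intro U htU hU hUW
    obtain ⟨ρ, rfl⟩ := exists_eq_graph hcompl hW hUW
      (mem_iff_mem_perpIn_of_isLagrangian hnd' hMp.1 hU hUW)
    exact ⟨ρ, (isotropic_graph_iff halt' hMm.1 hMp.1 hW).1 hU.1,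
      (tStable_graph_iff hWp htW htMp).1 htU, corresponds_graph,
      fun ρ' h ↦ graph_injective hWp h.eq_graph.symm⟩
  · intro ρ hρ htρ
    refine ⟨graph ρ, ⟨⟨(tStable_graph_iff hWp htW htMp).2 htρ,
      isLagrangian_graph halt' hnd' hcompl.codisjoint hMm.1 hMp.1 hW hρ, projEq_graph⟩,
      corresponds_graph⟩, fun U hU ↦ hU.2.eq_graph⟩

/-- Let `M = M₋ ⊕ M₊` be a decomposition of an snt-module into
`t`-stable Lagrangian subspaces and `W ⊆ M₋` a `t`-stable subspace. Then `U ↦ ρ_U`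
is a bijection from `P_W` (the `t`-stable Lagrangians `U` with `π₋(U) = W`) onto
`F_W` (the `F[[t]]`-linear self-dual maps `W → M₊/W^⊥`). -/
theorem t_lagrangian_graph_bijection {F M : Type*} [Field F] [CharZero F]
    [AddCommGroup M] [Module F M] [FiniteDimensional F M]
    (B : M →ₗ[F] M →ₗ[F] F) (halt : ∀ x : M, B x x = 0)
    (hnd : ∀ x : M, (∀ y : M, B x y = 0) → x = 0)
    (t : M →ₗ[F] M) (hnilp : ∃ N : ℕ, 0 < N ∧ t ^ N = 0)
    (hsd : ∀ x y : M, B (t x) y = B x (t y))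
    (Mm Mp : Submodule F M) (hcompl : IsCompl Mm Mp)
    (hMm : IsLagrangian B Mm) (hMp : IsLagrangian B Mp)
    (htMm : ∀ x ∈ Mm, t x ∈ Mm) (htMp : ∀ x ∈ Mp, t x ∈ Mp)
    (W : Submodule F M) (hW : W ≤ Mm) (htW : ∀ x ∈ W, t x ∈ W) :
    (∀ U : Submodule F M, (∀ x ∈ U, t x ∈ U) → IsLagrangian B U → ProjEq Mp U W →
      ∃ ρ : W →ₗ[F] (Mp ⧸ perpIn B Mp W),
        SelfDualMap B Mp W ρ ∧ TLinearMapTo B t Mp W htW htMp ρ ∧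
        Corresponds B Mp W U ρ ∧
        ∀ ρ' : W →ₗ[F] (Mp ⧸ perpIn B Mp W), Corresponds B Mp W U ρ' → ρ' = ρ) ∧
    (∀ ρ : W →ₗ[F] (Mp ⧸ perpIn B Mp W),
      SelfDualMap B Mp W ρ → TLinearMapTo B t Mp W htW htMp ρ →
      ∃! U : Submodule F M, ((∀ x ∈ U, t x ∈ U) ∧ IsLagrangian B U ∧ ProjEq Mp U W) ∧
        Corresponds B Mp W U ρ) :=
  t_lagrangian_graph_bijection_general B halt hnd t Mm Mp hcompl hMm hMp htMp W hW htW
end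

section
/- Let x ∈ M_- ⊗_F V, let e_1, …, e_m be a quasi-basis of the F[[t]]-module Im f_x, and let v_1, …, v_m ∈ V[[t]] satisfy f_x(v_i) = e_i for i = 1, …, m. Then the F[[t]]-span L of v_1, …, v_m is a primitive submodule of V[[t]], and L is a free F[[t]]-module with basis v_1, …, v_m. -/
open TensorProduct

/-! Over the discrete valuation ring `F⟦X⟧`, `d • eᵢ = 0` with `eᵢ ≠ 0` forces `X ∣ d`, so the
quasi-basis property says that in every relation `∑ aᵢ • f(vᵢ) = 0` all `aᵢ` are divisible by `X`.
Since `V⟦X⟧` is torsion-free, dividing by `X` turns a relation among the `vᵢ` into another one, so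
by Krull's intersection theorem the `vᵢ` are independent. The same divisibility, together with the
fact that the `f(vᵢ)` span `Im f`, shows that `L = span vᵢ` is `X`-saturated; hence `V⟦X⟧ ⧸ L` is a
finitely generated torsion-free module over a PID, thus free, and `L` is a direct summand. -/

theorem Irreducible.dvd_of_smul_eq_zero {R M : Type*} [CommRing R] [IsDomain R]
    [IsDiscreteValuationRing R] [AddCommGroup M] [Module R M] {ϖ d : R} (hϖ : Irreducible ϖ)
    {u : M} (hu : u ≠ 0) (h : d • u = 0) : ϖ ∣ d := by
  have hd : d ∈ IsLocalRing.maximalIdeal R := fun hunit ↦ hu (hunit.smul_eq_zero.mp h)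
  rwa [(IsDiscreteValuationRing.irreducible_iff_uniformizer ϖ).mp hϖ,
    Ideal.mem_span_singleton] at hd

section
variable {R W ι : Type*} [CommRing R] [IsDomain R] [AddCommGroup W] [Module R W]
  [Module.IsTorsionFree R W] [Fintype ι] {ϖ : R} {v : ι → W}

theorem exists_eq_smul_of_sum_smul_eq_zero (hϖ : ϖ ≠ 0)
    (hv : ∀ a : ι → R, ∑ i, a i • v i = 0 → ∀ i, ϖ ∣ a i) {a : ι → R}
    (ha : ∑ i, a i • v i = 0) : ∃ b : ι → R, a = ϖ • b ∧ ∑ i, b i • v i = 0 := by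
  choose b hb using hv a ha
  refine ⟨b, funext hb, (smul_eq_zero_iff_right hϖ).mp ?_⟩
  simpa [Finset.smul_sum, smul_smul, ← hb] using ha

theorem linearIndependent_of_dvd_of_sum_smul_eq_zero [IsNoetherianRing R] (hϖ0 : ϖ ≠ 0)
    (hϖ : ¬IsUnit ϖ) (hv : ∀ a : ι → R, ∑ i, a i • v i = 0 → ∀ i, ϖ ∣ a i) :
    LinearIndependent R v := by
  have hpow : ∀ n (a : ι → R), ∑ i, a i • v i = 0 → ∀ i, ϖ ^ n ∣ a i := by
    intro n
    induction n with
    | zero => simp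
    | succ n ih =>
      intro a ha i
      obtain ⟨b, rfl, hb⟩ := exists_eq_smul_of_sum_smul_eq_zero hϖ0 hv ha
      exact pow_succ' ϖ n ▸ mul_dvd_mul_left ϖ (ih b hb i)
  refine Fintype.linearIndependent_iff.mpr fun a ha i ↦ ?_
  have hbot := Ideal.iInf_pow_eq_bot_of_isDomain (Ideal.span {ϖ})
    (by rwa [Ne, Ideal.span_singleton_eq_top])
  rw [← Ideal.mem_bot, ← hbot, Submodule.mem_iInf]
  exact fun n ↦ by rw [Ideal.span_singleton_pow, Ideal.mem_span_singleton]; exact hpow n a ha i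

theorem Submodule.mem_span_range_of_smul_mem {M : Type*} [AddCommGroup M] [Module R M]
    (f : W →ₗ[R] M) (hϖ : ϖ ≠ 0) (hrel : ∀ a : ι → R, ∑ i, a i • f (v i) = 0 → ∀ i, ϖ ∣ a i)
    (hspan : ∀ y ∈ LinearMap.range f, ∃ d : ι → R, y = ∑ i, d i • f (v i)) {w : W}
    (hw : ϖ • w ∈ Submodule.span R (Set.range v)) : w ∈ Submodule.span R (Set.range v) := by
  obtain ⟨c, hc⟩ := (Submodule.mem_span_range_iff_exists_fun R).mp hw
  obtain ⟨d, hd⟩ := hspan (f w) ⟨w, rfl⟩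
  have hdc : ∑ i, (ϖ * d i - c i) • f (v i) = 0 := by
    simp only [sub_smul, mul_smul, Finset.sum_sub_distrib, ← Finset.smul_sum, ← hd]
    rw [sub_eq_zero, ← map_smul, ← hc, map_sum]
    simp only [map_smul]
  have hc_dvd : ∀ i, ϖ ∣ c i :=
    fun i ↦ (dvd_sub_right (dvd_mul_right ϖ (d i))).mp (hrel _ hdc i)
  choose c' hc' using hc_dvd
  have hw' : w = ∑ i, c' i • v i :=
    smul_right_injective W hϖ (by simp only [Finset.smul_sum, smul_smul, ← hc', hc])
  exact hw' ▸ (Submodule.mem_span_range_iff_exists_fun R).mpr ⟨c', rfl⟩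

end

theorem Submodule.isTorsionFree_quotient_of_smul_mem {R W : Type*} [CommRing R] [IsDomain R]
    [IsDiscreteValuationRing R] [AddCommGroup W] [Module R W] {ϖ : R} (hϖ : Irreducible ϖ)
    (S : Submodule R W) (hS : ∀ w, ϖ • w ∈ S → w ∈ S) : Module.IsTorsionFree R (W ⧸ S) := by
  have hpow : ∀ n w, ϖ ^ n • w ∈ S → w ∈ S := by
    intro n
    induction n with
    | zero => simp
    | succ n ih => exact fun w hw ↦ ih w (hS _ (by rwa [← mul_smul, ← pow_succ']))
  refine .of_smul_eq_zero fun a q haq ↦ or_iff_not_imp_left.mpr fun ha ↦ ?_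
  obtain ⟨n, u, rfl⟩ := IsDiscreteValuationRing.eq_unit_mul_pow_irreducible ha hϖ
  induction q using Submodule.Quotient.induction_on with | H w => ?_
  rw [← Submodule.Quotient.mk_smul, Submodule.Quotient.mk_eq_zero] at haq
  rw [Submodule.Quotient.mk_eq_zero]
  exact hpow n w (by simpa [mul_smul] using S.smul_mem (↑u⁻¹ : R) haq)

theorem Submodule.exists_isCompl_of_projective_quotient {R W : Type*} [Ring R] [AddCommGroup W]
    [Module R W] (S : Submodule R W) [Module.Projective R (W ⧸ S)] :
    ∃ S' : Submodule R W, IsCompl S S' := by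
  obtain ⟨s, hs⟩ := S.mkQ.exists_rightInverse_of_surjective S.range_mkQ
  have hidem : IsIdempotentElem (s ∘ₗ S.mkQ) := by
    change (s ∘ₗ S.mkQ) ∘ₗ (s ∘ₗ S.mkQ) = s ∘ₗ S.mkQ
    rw [LinearMap.comp_assoc, ← LinearMap.comp_assoc S.mkQ, hs, LinearMap.id_comp]
  have hker : LinearMap.ker (s ∘ₗ S.mkQ) = S := by
    rw [LinearMap.ker_comp_of_ker_eq_bot _ (LinearMap.ker_eq_bot_of_inverse hs), S.ker_mkQ]
  exact ⟨_, hker ▸ (LinearMap.IsIdempotentElem.isCompl hidem).symm⟩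

theorem primitive_span_of_quasi_basis_preimage_general {F : Type*} [Field F]
    {M : Type*} [AddCommGroup M] [Module F M] [Module (PowerSeries F) M]
    {V : Type*} [AddCommGroup V] [Module F V] [FiniteDimensional F V]
    -- `f_x`, characterized by additivity and its values on simple tensors
    (fx : (M ⊗[F] V) → ((PowerSeries F ⊗[F] V) →ₗ[PowerSeries F] M))
    (x : M ⊗[F] V) {m : ℕ} (e : Fin m → M)
    -- `e` is a quasi-basis of `Im f_x`
    (he_ne : ∀ i, e i ≠ 0)
    (he_span : ∀ y ∈ LinearMap.range (fx x),
      ∃ a : Fin m → PowerSeries F, y = ∑ i, a i • e i)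
    (he_rel : ∀ a : Fin m → PowerSeries F, (∑ i, a i • e i) = 0 → ∀ i, a i • e i = 0)
    (v : Fin m → PowerSeries F ⊗[F] V) (hv : ∀ i, fx x (v i) = e i) :
    (∃ L' : Submodule (PowerSeries F) (PowerSeries F ⊗[F] V),
      IsCompl (Submodule.span (PowerSeries F) (Set.range v)) L') ∧
    (∀ a : Fin m → PowerSeries F, (∑ i, a i • v i) = 0 → ∀ i, a i = 0) := by
  have hrel : ∀ a : Fin m → PowerSeries F, ∑ i, a i • fx x (v i) = 0 →
      ∀ i, PowerSeries.X ∣ a i := by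
    simp only [hv]
    exact fun a ha i ↦ PowerSeries.X_irreducible.dvd_of_smul_eq_zero (he_ne i) (he_rel a ha i)
  have hspan : ∀ y ∈ LinearMap.range (fx x),
      ∃ d : Fin m → PowerSeries F, y = ∑ i, d i • fx x (v i) := by
    simpa only [hv] using he_span
  have := (Submodule.span (PowerSeries F) (Set.range v)).isTorsionFree_quotient_of_smul_mem
    PowerSeries.X_irreducible
    fun _ ↦ Submodule.mem_span_range_of_smul_mem (fx x) PowerSeries.X_ne_zero hrel hspan
  -- the quotient is finite and torsion-free over the PID `F⟦X⟧`, so free, hence projective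
  refine ⟨Submodule.exists_isCompl_of_projective_quotient _, Fintype.linearIndependent_iff.mp
    (linearIndependent_of_dvd_of_sum_smul_eq_zero PowerSeries.X_ne_zero
      PowerSeries.X_irreducible.not_isUnit fun a ha ↦ hrel a ?_)⟩
  simpa using congrArg (fx x) ha

/-- Let `x ∈ M₋ ⊗_F V`, let `e₁, …, e_m` be a quasi-basis of the
`F[[t]]`-module `Im f_x`, and let `v₁, …, v_m ∈ V[[t]]` satisfy `f_x(vᵢ) = eᵢ`.
Then the `F[[t]]`-span of `v₁, …, v_m` is a primitive submodule of `V[[t]]` and is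
free with basis `v₁, …, v_m`.

Here `M₋` is a finite-dimensional `F`-vector space with a nilpotent action of `t`
(an `F[[t]]`-module), `V[[t]] = F[[t]] ⊗_F V`, and `f_x` is the `F[[t]]`-linear map
`V[[t]] → M₋` determined by `x` and the nondegenerate symmetric form on `V`;
`f_x` is specified here by its characterizing properties. -/
theorem primitive_span_of_quasi_basis_preimage {F : Type*} [Field F] [CharZero F]
    {M : Type*} [AddCommGroup M] [Module F M] [Module (PowerSeries F) M]
    [IsScalarTower F (PowerSeries F) M] [FiniteDimensional F M]
    (hnilp : ∃ N : ℕ, ∀ u : M, ((PowerSeries.X : PowerSeries F) ^ N) • u = 0)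
    {V : Type*} [AddCommGroup V] [Module F V] [FiniteDimensional F V]
    (BV : V →ₗ[F] V →ₗ[F] F) (hsymm : ∀ v w : V, BV v w = BV w v)
    (hnd : ∀ v : V, (∀ w : V, BV v w = 0) → v = 0)
    -- `f_x`, characterized by additivity and its values on simple tensors
    (fx : (M ⊗[F] V) → ((PowerSeries F ⊗[F] V) →ₗ[PowerSeries F] M))
    (hfx_add : ∀ x y : M ⊗[F] V, fx (x + y) = fx x + fx y)
    (hfx_val : ∀ (u : M) (v : V) (b : PowerSeries F) (w : V),
      fx (u ⊗ₜ[F] v) (b ⊗ₜ[F] w) = (b * algebraMap F (PowerSeries F) (BV v w)) • u)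
    (x : M ⊗[F] V) {m : ℕ} (e : Fin m → M)
    -- `e` is a quasi-basis of `Im f_x`
    (he_ne : ∀ i, e i ≠ 0)
    (he_mem : ∀ i, e i ∈ LinearMap.range (fx x))
    (he_span : ∀ y ∈ LinearMap.range (fx x),
      ∃ a : Fin m → PowerSeries F, y = ∑ i, a i • e i)
    (he_rel : ∀ a : Fin m → PowerSeries F, (∑ i, a i • e i) = 0 → ∀ i, a i • e i = 0)
    (v : Fin m → PowerSeries F ⊗[F] V) (hv : ∀ i, fx x (v i) = e i) :
    (∃ L' : Submodule (PowerSeries F) (PowerSeries F ⊗[F] V),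
      IsCompl (Submodule.span (PowerSeries F) (Set.range v)) L') ∧
    (∀ a : Fin m → PowerSeries F, (∑ i, a i • v i) = 0 → ∀ i, a i = 0) :=
  primitive_span_of_quasi_basis_preimage_general fx x e he_ne he_span he_rel v hv
end

section
/- Let x ∈ M_- ⊗_F V and let e_1, …, e_m be a quasi-basis of the F[[t]]-module Im f_x. Then there exist w_1, …, w_m ∈ V[[t]] such that: (1) the F[[t]]-span of w_1, …, w_m is a primitive submodule of V[[t]] which is free with basis w_1, …, w_m; and (2) x = e_1 ⊗ w_1 + ⋯ + e_m ⊗ w_m under the identification M_- ⊗_F V = M_- ⊗_{F[[t]]} V[[t]]. In particular x ∈ (Im f_x) ⊗_{F[[t]]} V[[t]]. -/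
/-!
Write `x = ∑ₖ uₖ ⊗ bₖ` for a basis `b` of `V`. Evaluating `f_x` on the basis of `V[[t]]` dual to `b`
shows that `Im f_x` is spanned by the `uₖ`, so `uₖ = ∑ᵢ Cₖᵢ eᵢ` and `x = ∑ᵢ eᵢ ⊗ wᵢ` with
`wᵢ = ∑ₖ Cₖᵢ bₖ`. Because `F[[t]]` is local, the quasi-basis property gives a left inverse `B` of
`C`; then `B` applied to the `b`-coordinates is a functional sending `wᵢ` to the `i`-th standard
vector, so the `wᵢ` are free and span a direct summand.
-/

open TensorProduct Submodule IsLocalRing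

theorem Matrix.isUnit_det_of_map_residue_eq_one {R n : Type*} [CommRing R] [IsLocalRing R]
    [Fintype n] [DecidableEq n] {A : Matrix n n R} (h : A.map (residue R) = 1) :
    IsUnit A.det := by
  rw [← isUnit_map_iff (residue R), RingHom.map_det, RingHom.mapMatrix_apply, h, det_one]
  exact isUnit_one

theorem IsLocalRing.mem_maximalIdeal_of_smul_eq_zero {R M : Type*} [CommRing R] [IsLocalRing R]
    [AddCommGroup M] [Module R M] {a : R} {y : M} (h : a • y = 0) (hy : y ≠ 0) :
    a ∈ maximalIdeal R :=
  (mem_maximalIdeal a).2 fun ha => hy (ha.smul_eq_zero.1 h)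

theorem exists_left_invertible_coeffs_of_quasiBasis {R M ι κ : Type*} [CommRing R]
    [IsLocalRing R] [AddCommGroup M] [Module R M] [Fintype ι] [Fintype κ] [DecidableEq κ]
    {u : ι → M} {e : κ → M} (he_ne : ∀ i, e i ≠ 0)
    (he_rel : ∀ a : κ → R, ∑ i, a i • e i = 0 → ∀ i, a i • e i = 0)
    (he : ∀ i, e i ∈ span R (Set.range u)) (hu : ∀ k, u k ∈ span R (Set.range e)) :
    ∃ C : Matrix ι κ R, (∀ k, ∑ i, C k i • e i = u k) ∧ ∃ B : Matrix κ ι R, B * C = 1 := by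
  choose C hC using fun k => (mem_span_range_iff_exists_fun R).1 (hu k)
  choose D hD using fun i => (mem_span_range_iff_exists_fun R).1 (he i)
  set A := Matrix.of D * Matrix.of C
  have hAe : ∀ i, ∑ j, A i j • e j = e i := fun i => by
    simp_rw [A, Matrix.mul_apply, Matrix.of_apply, Finset.sum_smul, mul_smul]
    rw [Finset.sum_comm]
    simp_rw [← Finset.smul_sum, hC, hD]
  have hA : A.map (residue R) = 1 := by
    ext i j
    rw [← Matrix.map_one (residue R) (map_zero _) (map_one _), Matrix.map_apply,
      Matrix.map_apply, ← sub_eq_zero, ← map_sub, residue_eq_zero_iff]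
    refine mem_maximalIdeal_of_smul_eq_zero
      (he_rel (fun j => A i j - (1 : Matrix κ κ R) i j) ?_ j) (he_ne j)
    simp [sub_smul, Finset.sum_sub_distrib, hAe, Matrix.one_apply, ite_smul]
  refine ⟨.of C, hC, A⁻¹ * Matrix.of D, ?_⟩
  rw [Matrix.mul_assoc, Matrix.nonsing_inv_mul _ (Matrix.isUnit_det_of_map_residue_eq_one hA)]

section DualFamily

variable {R N κ : Type*} [CommRing R] [AddCommGroup N] [Module R N] [Fintype κ] [DecidableEq κ]
  {w : κ → N} {g : N →ₗ[R] κ → R}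

theorem linearIndependent_of_apply_eq_single (hg : ∀ i, g (w i) = Pi.single i 1) :
    LinearIndependent R w :=
  .of_comp g (by convert (Pi.basisFun R κ).linearIndependent; ext1 i; simp [hg])

theorem exists_isCompl_span_of_apply_eq_single (hg : ∀ i, g (w i) = Pi.single i 1) :
    ∃ L : Submodule R N, IsCompl (span R (Set.range w)) L := by
  set s := Fintype.linearCombination R w
  have hgs : g ∘ₗ s = LinearMap.id := by
    ext i j
    simp [s, hg]
  have hT : IsIdempotentElem (s ∘ₗ g) := by
    rw [IsIdempotentElem, Module.End.mul_eq_comp, LinearMap.comp_assoc,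
      ← LinearMap.comp_assoc g, hgs, LinearMap.id_comp]
  refine ⟨LinearMap.ker (s ∘ₗ g), ?_⟩
  convert LinearMap.IsIdempotentElem.isCompl hT using 1
  rw [LinearMap.range_comp_of_range_eq_top, Fintype.range_linearCombination]
  exact LinearMap.range_eq_top.2 fun a =>
    ⟨s a, by rw [← LinearMap.comp_apply, hgs, LinearMap.id_apply]⟩

end DualFamily

theorem Module.Basis.mulVecLin_comp_equivFun_sum_smul_eq_single {R N ι κ : Type*} [CommRing R]
    [AddCommGroup N] [Module R N] [Fintype ι] [Fintype κ] [DecidableEq κ] (β : Module.Basis ι R N)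
    {C : Matrix ι κ R} {B : Matrix κ ι R} (hBC : B * C = 1) (i : κ) :
    (B.mulVecLin ∘ₗ β.equivFun.toLinearMap) (∑ k, C k i • β k) = Pi.single i 1 := by
  rw [LinearMap.comp_apply, LinearEquiv.coe_coe, ← β.equivFun_symm_apply,
    LinearEquiv.apply_symm_apply, Matrix.mulVecLin_apply]
  change B.mulVec (C.col i) = _
  rw [← Matrix.mulVec_single_one, Matrix.mulVec_mulVec, hBC, Matrix.one_mulVec]

theorem TensorProduct.exists_eq_sum_tmul_basis {R M N ι : Type*} [CommSemiring R]
    [AddCommMonoid M] [Module R M] [AddCommMonoid N] [Module R N] [Fintype ι]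
    (b : Module.Basis ι R N) (x : M ⊗[R] N) : ∃ u : ι → M, x = ∑ k, u k ⊗ₜ[R] b k := by
  classical
  refine ⟨equivFinsuppOfBasisRight b x, ?_⟩
  conv_lhs => rw [← (equivFinsuppOfBasisRight b).symm_apply_apply x]
  rw [equivFinsuppOfBasisRight_symm_apply, Finsupp.sum_fintype _ _ fun i => zero_tmul _ (b i)]

theorem TensorProduct.sum_tmul_eq_sum_tmul_sum_smul {R M N ι κ : Type*} [CommSemiring R]
    [AddCommMonoid M] [Module R M] [AddCommMonoid N] [Module R N] [Fintype ι] [Fintype κ]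
    {u : ι → M} {e : κ → M} {C : Matrix ι κ R} (hC : ∀ k, ∑ i, C k i • e i = u k) (n : ι → N) :
    ∑ k, u k ⊗ₜ[R] n k = ∑ i, e i ⊗ₜ[R] ∑ k, C k i • n k := by
  simp_rw [← hC, sum_tmul, tmul_sum, smul_tmul]
  exact Finset.sum_comm

theorem range_eq_span_of_apply_one_tmul {F A V M ι : Type*} [Field F] [CommRing A]
    [Algebra F A] [AddCommGroup V] [Module F V] [AddCommGroup M] [Module A M] [Fintype ι]
    [DecidableEq ι] {B : LinearMap.BilinForm F V} (hB : B.SeparatingLeft) (b : Module.Basis ι F V) (u : ι → M)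
    {f : A ⊗[F] V →ₗ[A] M} (hf : ∀ v, f (1 ⊗ₜ v) = ∑ j, algebraMap F A (B (b j) v) • u j) :
    LinearMap.range f = span A (Set.range u) := by
  have := b.finiteDimensional_of_finite
  have hB' : B.Nondegenerate := .ofSeparatingLeft hB
  set b' := B.flip.dualBasis hB'.flip b
  have hb' : ∀ j k, B (b j) (b' k) = if j = k then 1 else 0 := fun j k =>
    LinearMap.BilinForm.apply_dualBasis_left hB'.flip b k j
  set β := Algebra.TensorProduct.basis A b'
  have hfβ : f ∘ β = u := funext fun k => by
    simp [β, Algebra.TensorProduct.basis_apply, hf, hb']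
  rw [LinearMap.range_eq_map, ← β.span_eq, map_span, ← Set.range_comp, hfβ]

theorem snt_tensor_normal_form_general {F : Type*} [Field F]
    {M : Type*} [AddCommGroup M] [Module F M] [Module (PowerSeries F) M]
    {V : Type*} [AddCommGroup V] [Module F V] [FiniteDimensional F V]
    (BV : V →ₗ[F] V →ₗ[F] F)
    (hnd : ∀ v : V, (∀ w : V, BV v w = 0) → v = 0)
    -- `f_x`, characterized by additivity and its values on simple tensors
    (fx : (M ⊗[F] V) → ((PowerSeries F ⊗[F] V) →ₗ[PowerSeries F] M))
    (hfx_add : ∀ x y : M ⊗[F] V, fx (x + y) = fx x + fx y)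
    (hfx_val : ∀ (u : M) (v : V) (b : PowerSeries F) (w : V),
      fx (u ⊗ₜ[F] v) (b ⊗ₜ[F] w) = (b * algebraMap F (PowerSeries F) (BV v w)) • u)
    -- the canonical identification `M ⊗_F V = M ⊗_{F[[t]]} (F[[t]] ⊗_F V)`
    (ψ : (M ⊗[F] V) → (M ⊗[PowerSeries F] (PowerSeries F ⊗[F] V)))
    (hψ_add : ∀ x y : M ⊗[F] V, ψ (x + y) = ψ x + ψ y)
    (hψ_val : ∀ (u : M) (v : V),
      ψ (u ⊗ₜ[F] v) = u ⊗ₜ[PowerSeries F] ((1 : PowerSeries F) ⊗ₜ[F] v))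
    (x : M ⊗[F] V) {m : ℕ} (e : Fin m → M)
    -- `e` is a quasi-basis of `Im f_x`
    (he_ne : ∀ i, e i ≠ 0)
    (he_mem : ∀ i, e i ∈ LinearMap.range (fx x))
    (he_span : ∀ y ∈ LinearMap.range (fx x),
      ∃ a : Fin m → PowerSeries F, y = ∑ i, a i • e i)
    (he_rel : ∀ a : Fin m → PowerSeries F, (∑ i, a i • e i) = 0 → ∀ i, a i • e i = 0) :
    ∃ w : Fin m → PowerSeries F ⊗[F] V,
      (∃ L' : Submodule (PowerSeries F) (PowerSeries F ⊗[F] V),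
        IsCompl (Submodule.span (PowerSeries F) (Set.range w)) L') ∧
      (∀ a : Fin m → PowerSeries F, (∑ i, a i • w i) = 0 → ∀ i, a i = 0) ∧
      ψ x = ∑ i, e i ⊗ₜ[PowerSeries F] w i := by
  set b := Module.finBasis F V
  set β := Algebra.TensorProduct.basis (PowerSeries F) b
  obtain ⟨u, rfl⟩ := exists_eq_sum_tmul_basis b x
  have hfx : ∀ v, fx (∑ k, u k ⊗ₜ b k) (1 ⊗ₜ v) =
      ∑ j, algebraMap F (PowerSeries F) (BV (b j) v) • u j := by
    intro v
    have hfx_sum : fx (∑ k, u k ⊗ₜ b k) = ∑ k, fx (u k ⊗ₜ b k) :=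
      map_sum (AddMonoidHom.mk' fx hfx_add) _ _
    simp_rw [hfx_sum, LinearMap.sum_apply, hfx_val, one_mul]
  have hrange := range_eq_span_of_apply_one_tmul hnd b u hfx
  obtain ⟨C, hC, B, hBC⟩ := exists_left_invertible_coeffs_of_quasiBasis he_ne he_rel
    (fun i => hrange ▸ he_mem i) fun k => by
      obtain ⟨a, ha⟩ := he_span (u k) (hrange ▸ subset_span ⟨k, rfl⟩)
      exact (mem_span_range_iff_exists_fun _).2 ⟨a, ha.symm⟩
  have hg := β.mulVecLin_comp_equivFun_sum_smul_eq_single hBC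
  refine ⟨fun i => ∑ k, C k i • β k, exists_isCompl_span_of_apply_eq_single hg,
    Fintype.linearIndependent_iff.1 (linearIndependent_of_apply_eq_single hg), ?_⟩
  have hψ_sum : ψ (∑ k, u k ⊗ₜ b k) = ∑ k, ψ (u k ⊗ₜ b k) :=
    map_sum (AddMonoidHom.mk' ψ hψ_add) _ _
  simp_rw [hψ_sum, hψ_val, ← Algebra.TensorProduct.basis_apply]
  exact sum_tmul_eq_sum_tmul_sum_smul hC _

/-- Let `x ∈ M₋ ⊗_F V` and let `e₁, …, e_m` be a quasi-basis of
`Im f_x`. Then there exist `w₁, …, w_m ∈ V[[t]]` such that the `F[[t]]`-span of the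
`wᵢ` is a primitive submodule of `V[[t]]`, free with basis `w₁, …, w_m`, and
`x = e₁ ⊗ w₁ + ⋯ + e_m ⊗ w_m` under the canonical identification
`M₋ ⊗_F V = M₋ ⊗_{F[[t]]} V[[t]]` (the identification `ψ` is specified by its
characterizing properties). In particular `x ∈ (Im f_x) ⊗_{F[[t]]} V[[t]]`. -/
theorem snt_tensor_normal_form {F : Type*} [Field F] [CharZero F]
    {M : Type*} [AddCommGroup M] [Module F M] [Module (PowerSeries F) M]
    [IsScalarTower F (PowerSeries F) M] [FiniteDimensional F M]
    (hnilp : ∃ N : ℕ, ∀ u : M, ((PowerSeries.X : PowerSeries F) ^ N) • u = 0)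
    {V : Type*} [AddCommGroup V] [Module F V] [FiniteDimensional F V]
    (BV : V →ₗ[F] V →ₗ[F] F) (hsymm : ∀ v w : V, BV v w = BV w v)
    (hnd : ∀ v : V, (∀ w : V, BV v w = 0) → v = 0)
    -- `f_x`, characterized by additivity and its values on simple tensors
    (fx : (M ⊗[F] V) → ((PowerSeries F ⊗[F] V) →ₗ[PowerSeries F] M))
    (hfx_add : ∀ x y : M ⊗[F] V, fx (x + y) = fx x + fx y)
    (hfx_val : ∀ (u : M) (v : V) (b : PowerSeries F) (w : V),
      fx (u ⊗ₜ[F] v) (b ⊗ₜ[F] w) = (b * algebraMap F (PowerSeries F) (BV v w)) • u)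
    -- the canonical identification `M ⊗_F V = M ⊗_{F[[t]]} (F[[t]] ⊗_F V)`
    (ψ : (M ⊗[F] V) → (M ⊗[PowerSeries F] (PowerSeries F ⊗[F] V)))
    (hψ_add : ∀ x y : M ⊗[F] V, ψ (x + y) = ψ x + ψ y)
    (hψ_val : ∀ (u : M) (v : V),
      ψ (u ⊗ₜ[F] v) = u ⊗ₜ[PowerSeries F] ((1 : PowerSeries F) ⊗ₜ[F] v))
    (x : M ⊗[F] V) {m : ℕ} (e : Fin m → M)
    -- `e` is a quasi-basis of `Im f_x`
    (he_ne : ∀ i, e i ≠ 0)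
    (he_mem : ∀ i, e i ∈ LinearMap.range (fx x))
    (he_span : ∀ y ∈ LinearMap.range (fx x),
      ∃ a : Fin m → PowerSeries F, y = ∑ i, a i • e i)
    (he_rel : ∀ a : Fin m → PowerSeries F, (∑ i, a i • e i) = 0 → ∀ i, a i • e i = 0) :
    ∃ w : Fin m → PowerSeries F ⊗[F] V,
      (∃ L' : Submodule (PowerSeries F) (PowerSeries F ⊗[F] V),
        IsCompl (Submodule.span (PowerSeries F) (Set.range w)) L') ∧
      (∀ a : Fin m → PowerSeries F, (∑ i, a i • w i) = 0 → ∀ i, a i = 0) ∧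
      ψ x = ∑ i, e i ⊗ₜ[PowerSeries F] w i :=
  snt_tensor_normal_form_general BV hnd fx hfx_add hfx_val ψ hψ_add hψ_val x e he_ne he_mem he_span
    he_rel
end

section
/- Let k_1 ≥ k_2 ≥ ⋯ ≥ k_m ≥ 1 be integers, and let L_1 and L_2 be primitive submodules of V[[t]] which are free F[[t]]-modules with bases a_1, …, a_m and b_1, …, b_m respectively. Suppose (a_i, a_j) ≡ (b_i, b_j) mod t^{min(k_i, k_j)} for all 1 ≤ i, j ≤ m. Then there exist b̃_1, …, b̃_m ∈ V[[t]] such that: b̃_i − b_i ∈ t^{k_i}·V[[t]] for all i; (b̃_i, b̃_j) = (a_i, a_j) in F[[t]] for all i, j; and the F[[t]]-span of b̃_1, …, b̃_m is a primitive submodule of V[[t]] which is free with basis b̃_1, …, b̃_m. -/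
/-!
Write `x_{il}` for the unknown correction `b̃ᵢ = bᵢ + Σₗ x_{il} dₗ`, where `(dₗ)` is a family with
`(dₗ, bᵢ) = δₗᵢ`; it exists because `L₂` is a direct summand and the form is perfect on `V[[t]]`.
The Gram matrix of `b̃` is then `G_b + x + xᵀ + x D xᵀ` with `D = ((dₗ, dₗ'))`, so the problem is
the matrix equation `x + xᵀ + x D xᵀ = E := G_a - G_b` with `t^{kᵢ} ∣ x_{il}`. Writing
`x_{il} = t^{kᵢ} y_{il}`, it becomes a fixed-point equation for `y` whose map is a `t`-adic
contraction (this uses `kᵢ ≥ 1` and `1/2 ∈ F`), and `F[[t]]` is `t`-adically complete.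
Finally `b̃ ≡ b mod t`, so for a left inverse `ψ` of `c ↦ Σ cᵢ bᵢ` the matrix of
`ψ ∘ (c ↦ Σ cᵢ b̃ᵢ)` is `≡ 1 mod t`, hence invertible, and `b̃` again spans a free direct summand.
-/

open TensorProduct PowerSeries

namespace PowerSeries
variable {A : Type*} [CommRing A]

theorem sModEq_X_pow_iff {n : ℕ} {f g : A⟦X⟧} :
    f ≡ g [SMOD ((Ideal.span {(X : A⟦X⟧)}) ^ n • ⊤ : Submodule A⟦X⟧ A⟦X⟧)] ↔ X ^ n ∣ f - g := by
  rw [SModEq.sub_mem, smul_eq_mul, Ideal.mul_top, Ideal.span_singleton_pow,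
    Ideal.mem_span_singleton]

theorem eq_of_forall_X_pow_dvd_sub {f g : A⟦X⟧} (h : ∀ n, X ^ n ∣ f - g) : f = g :=
  IsHausdorff.eq_iff_smodEq (I := Ideal.span {(X : A⟦X⟧)}).mpr fun n => sModEq_X_pow_iff.mpr (h n)

theorem exists_X_pow_dvd_sub_of_cauchy (f : ℕ → A⟦X⟧) (hf : ∀ n, X ^ n ∣ f (n + 1) - f n) :
    ∃ L, ∀ n, X ^ n ∣ f n - L := by
  have cauchy {m n : ℕ} (hmn : m ≤ n) : X ^ m ∣ f m - f n := by
    induction n, hmn using Nat.le_induction with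
    | base => simp
    | succ n hmn ih =>
      rw [← sub_add_sub_cancel _ (f n)]
      exact dvd_add ih (dvd_sub_comm.mp ((pow_dvd_pow X hmn).trans (hf n)))
  obtain ⟨L, hL⟩ := IsPrecomplete.prec (I := Ideal.span {(X : A⟦X⟧)}) inferInstance
    fun hmn => sModEq_X_pow_iff.mpr (cauchy hmn)
  exact ⟨L, fun n => sModEq_X_pow_iff.mp (hL n)⟩

theorem exists_fixedPoint_of_X_pow_dvd {ι : Type*} (Φ : (ι → A⟦X⟧) → ι → A⟦X⟧)
    (hΦ : ∀ n x y, (∀ i, X ^ n ∣ x i - y i) → ∀ i, X ^ (n + 1) ∣ Φ x i - Φ y i) :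
    ∃ x, Φ x = x := by
  set s : ℕ → ι → A⟦X⟧ := fun n => Φ^[n] 0
  have hs (n : ℕ) : ∀ i, X ^ n ∣ s (n + 1) i - s n i := by
    induction n with
    | zero => simp
    | succ n ih =>
      simp only [s, Function.iterate_succ_apply'] at ih ⊢
      exact hΦ n _ _ ih
  choose L hL using fun i => exists_X_pow_dvd_sub_of_cauchy (s · i) (hs · i)
  refine ⟨L, funext fun i => eq_of_forall_X_pow_dvd_sub fun n => ?_⟩
  have hΦL : X ^ (n + 1) ∣ Φ L i - s (n + 1) i := by
    simp only [s, Function.iterate_succ_apply']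
    exact hΦ n _ _ (fun j => dvd_sub_comm.mp (hL j n)) i
  rw [← sub_add_sub_cancel _ (s (n + 1) i)]
  exact dvd_add ((pow_dvd_pow X n.le_succ).trans hΦL) ((pow_dvd_pow X n.le_succ).trans (hL i _))

end PowerSeries

namespace Matrix
variable {R ι : Type*} [CommRing R] [Fintype ι]

theorem dvd_mul_mul_transpose_sub {a : R} {Y Y' : Matrix ι ι R} (D : Matrix ι ι R)
    (h : ∀ i j, a ∣ Y i j - Y' i j) (i j : ι) :
    a ∣ (Y * D * Yᵀ - Y' * D * Y'ᵀ) i j := by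
  choose z hz using h
  obtain rfl : Y = Y' + a • of z := by ext i j; simp [← hz]
  have : (Y' + a • of z) * D * (Y' + a • of z)ᵀ - Y' * D * Y'ᵀ
      = a • (of z * D * Y'ᵀ + Y' * D * (of z)ᵀ + a • (of z * D * (of z)ᵀ)) := by
    simp only [transpose_add, transpose_smul, add_mul, mul_add, Matrix.smul_mul, Matrix.mul_smul,
      smul_add, smul_smul]
    abel
  rw [this, smul_apply, smul_eq_mul]
  exact dvd_mul_right _ _

variable {A : Type*} [CommRing A]

theorem exists_eq_mul_sub_X_pow_mul_mul_transpose (k : ι → ℕ) (hk : ∀ i, 1 ≤ k i)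
    (c e D : Matrix ι ι A⟦X⟧) :
    ∃ Y : Matrix ι ι A⟦X⟧, ∀ i j, Y i j = c i j * (e i j - X ^ k j * (Y * D * Yᵀ) i j) := by
  let W (y : ι × ι → A⟦X⟧) : Matrix ι ι A⟦X⟧ :=
    of (Function.curry y) * D * (of (Function.curry y))ᵀ
  obtain ⟨y, hy⟩ := exists_fixedPoint_of_X_pow_dvd
      (fun y p => c p.1 p.2 * (e p.1 p.2 - X ^ k p.2 * W y p.1 p.2)) fun n y y' h p => by
    have hW : X ^ n ∣ (W y' - W y) p.1 p.2 :=
      dvd_mul_mul_transpose_sub D (fun i j => dvd_sub_comm.mp (h (i, j))) p.1 p.2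
    rw [sub_apply] at hW
    rw [pow_succ', show ∀ u v : A⟦X⟧, c p.1 p.2 * (e p.1 p.2 - X ^ k p.2 * u)
      - c p.1 p.2 * (e p.1 p.2 - X ^ k p.2 * v) = c p.1 p.2 * (X ^ k p.2 * (v - u)) from
      fun u v => by ring]
    exact dvd_mul_of_dvd_right (mul_dvd_mul (dvd_pow_self X (by have := hk p.2; omega)) hW) _
  exact ⟨of (Function.curry y), fun i j => (congr_fun hy (i, j)).symm⟩

theorem exists_add_transpose_add_mul_mul_transpose_eq [Invertible (2 : A⟦X⟧)]
    (k : ι → ℕ) (hk : ∀ i, 1 ≤ k i) {D E : Matrix ι ι A⟦X⟧} (hD : D.IsSymm) (hE : E.IsSymm)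
    (hE_dvd : ∀ i j, X ^ min (k i) (k j) ∣ E i j) :
    ∃ x : Matrix ι ι A⟦X⟧, (∀ i j, X ^ k i ∣ x i j) ∧ x + xᵀ + x * D * xᵀ = E := by
  classical
  choose e he using hE_dvd
  -- `Pᵢⱼ = cᵢⱼ Sᵢⱼ` splits a symmetric `S` as `P + Pᵀ`, and `X ^ kᵢ ∣ Pᵢⱼ` if `X ^ min kᵢ kⱼ ∣ Sᵢⱼ`
  let c : Matrix ι ι A⟦X⟧ := of fun i j => if k i < k j then 1 else if k j < k i then 0 else ⅟2
  obtain ⟨Y, hY⟩ := exists_eq_mul_sub_X_pow_mul_mul_transpose k hk c (of e) D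
  have hW (i j : ι) : (Y * D * Yᵀ) j i = (Y * D * Yᵀ) i j := by
    conv_lhs => rw [← transpose_apply (Y * D * Yᵀ), transpose_mul, transpose_mul, hD.eq,
      transpose_transpose, ← Matrix.mul_assoc]
  set K : Matrix ι ι A⟦X⟧ := diagonal fun i => X ^ k i
  refine ⟨K * Y, fun i j => by simp [K], Matrix.ext fun i j => ?_⟩
  have hxDx : (K * Y * D * (K * Y)ᵀ) i j = X ^ k i * X ^ k j * (Y * D * Yᵀ) i j := by
    have : K * Y * D * (K * Y)ᵀ = K * (Y * D * Yᵀ) * K := by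
      simp only [K, transpose_mul, diagonal_transpose, Matrix.mul_assoc]
    rw [this, mul_diagonal, diagonal_mul]
    ring
  simp only [add_apply, transpose_apply, K, diagonal_mul, hxDx]
  rw [hY i j, hY j i, hW i j]
  have hEij := he i j
  have hEji := he j i
  rw [hE.apply, min_comm] at hEji
  rcases lt_trichotomy (k i) (k j) with hij | hij | hij
  · simp only [c, of_apply, if_pos hij, if_neg (lt_asymm hij)]
    rw [min_eq_left hij.le] at hEij
    linear_combination hEij.symm
  · simp only [c, of_apply, hij, lt_irrefl, if_false] at hEij hEji ⊢
    rw [min_self] at hEij hEji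
    linear_combination ⅟2 * hEij.symm + ⅟2 * hEji.symm
      + (E i j - X ^ k j * X ^ k j * (Y * D * Yᵀ) i j) * invOf_mul_self (2 : A⟦X⟧)
  · simp only [c, of_apply, if_pos hij, if_neg (lt_asymm hij)]
    rw [min_eq_right hij.le] at hEji
    linear_combination hEji.symm

end Matrix

section SplitFamily
variable {R M ι : Type*} [CommRing R] [AddCommGroup M] [Module R M] {b : ι → M}

theorem exists_leftInverse_linearCombination_of_isCompl (hb : LinearIndependent R b)
    {L : Submodule R M} (hL : IsCompl (Submodule.span R (Set.range b)) L) :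
    ∃ ψ : M →ₗ[R] ι →₀ R, ψ ∘ₗ Finsupp.linearCombination R b = LinearMap.id :=
  ⟨LinearMap.linearProjOfIsCompl L _ hb (by rwa [Finsupp.range_linearCombination]),
    LinearMap.ext fun _ => LinearMap.linearProjOfIsCompl_apply_left (hi := hb) ..⟩

variable {ψ : M →ₗ[R] ι →₀ R} (hψ : ψ ∘ₗ Finsupp.linearCombination R b = LinearMap.id)
include hψ

theorem linearIndependent_of_leftInverse_linearCombination : LinearIndependent R b :=
  Function.LeftInverse.injective (g := ψ) fun c => congr($hψ c)

theorem isCompl_span_ker_of_leftInverse_linearCombination :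
    IsCompl (Submodule.span R (Set.range b)) (LinearMap.ker ψ) := by
  have hidem : IsIdempotentElem (Finsupp.linearCombination R b ∘ₗ ψ) := by
    rw [IsIdempotentElem, Module.End.mul_eq_comp, LinearMap.comp_assoc,
      ← LinearMap.comp_assoc ψ, hψ, LinearMap.id_comp]
  have hrange : LinearMap.range (Finsupp.linearCombination R b ∘ₗ ψ)
      = Submodule.span R (Set.range b) := by
    rw [LinearMap.range_comp_of_range_eq_top, Finsupp.range_linearCombination]
    exact LinearMap.range_eq_top.mpr fun c => ⟨_, congr($hψ c)⟩
  have hker : LinearMap.ker (Finsupp.linearCombination R b ∘ₗ ψ) = LinearMap.ker ψ :=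
    LinearMap.ker_comp_of_ker_eq_bot _
      (LinearMap.ker_eq_bot.mpr (linearIndependent_of_leftInverse_linearCombination hψ))
  simpa [hrange, hker] using LinearMap.IsIdempotentElem.isCompl hidem

end SplitFamily

theorem exists_leftInverse_linearCombination_of_eq_add_X_smul {A M ι : Type*} [CommRing A]
    [AddCommGroup M] [Module A⟦X⟧ M] [Fintype ι] {b b' : ι → M} {ψ : M →ₗ[A⟦X⟧] ι →₀ A⟦X⟧}
    (hψ : ψ ∘ₗ Finsupp.linearCombination A⟦X⟧ b = LinearMap.id)
    (hb' : ∀ i, ∃ c, b' i = b i + (X : A⟦X⟧) • c) :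
    ∃ ψ' : M →ₗ[A⟦X⟧] ι →₀ A⟦X⟧, ψ' ∘ₗ Finsupp.linearCombination A⟦X⟧ b' = LinearMap.id := by
  classical
  set T := ψ ∘ₗ Finsupp.linearCombination A⟦X⟧ b'
  have hψb (i : ι) : ψ (b i) = Finsupp.single i 1 := by
    simpa using congr($hψ (Finsupp.single i 1))
  have hT_mod_X : constantCoeff.mapMatrix
      (LinearMap.toMatrix Finsupp.basisSingleOne Finsupp.basisSingleOne T) = 1 := by
    refine Matrix.ext fun i j => ?_
    obtain ⟨c, hc⟩ := hb' j
    simp [T, LinearMap.toMatrix_apply, hc, hψb, Matrix.one_apply, Finsupp.single_apply, eq_comm]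
  have hT : IsUnit T := by
    rw [LinearMap.isUnit_iff_isUnit_det, ← LinearMap.det_toMatrix Finsupp.basisSingleOne,
      isUnit_iff_constantCoeff, RingHom.map_det, hT_mod_X, Matrix.det_one]
    exact isUnit_one
  refine ⟨↑hT.unit⁻¹ ∘ₗ ψ, ?_⟩
  rw [LinearMap.comp_assoc, ← Module.End.mul_eq_comp]
  exact hT.unit.inv_mul

namespace LinearMap.BilinForm

section BaseChange
variable {F V A : Type*} [Field F] [AddCommGroup V] [Module F V] [CommRing A] [Algebra F A]

theorem eq_baseChange_of_map_add (BV : LinearMap.BilinForm F V) (f : A ⊗[F] V → A ⊗[F] V → A)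
    (hl : ∀ x y z, f (x + y) z = f x z + f y z) (hr : ∀ x y z, f x (y + z) = f x y + f x z)
    (hf : ∀ a v a' w, f (a ⊗ₜ v) (a' ⊗ₜ w) = a * a' * algebraMap F A (BV v w)) (x y : A ⊗[F] V) :
    f x y = BV.baseChange A x y := by
  induction x using TensorProduct.induction_on with
  | zero => simpa using hl 0 0 y
  | add x x' hx hx' => rw [hl, hx, hx', map_add, LinearMap.add_apply]
  | tmul a v =>
    induction y using TensorProduct.induction_on with
    | zero => simpa using hr (a ⊗ₜ v) 0 0
    | add y y' hy hy' => rw [hr, hy, hy', map_add]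
    | tmul a' w => rw [hf, baseChange_tmul, Algebra.smul_def, mul_comm]

theorem exists_baseChange_eq [FiniteDimensional F V] {BV : LinearMap.BilinForm F V}
    (hBV : BV.Nondegenerate) (g : Module.Dual A (A ⊗[F] V)) : ∃ d, BV.baseChange A d = g := by
  let e := Module.finBasis F V
  let eA := Algebra.TensorProduct.basis A e
  refine ⟨∑ s, g (eA s) • (1 ⊗ₜ BV.dualBasis hBV e s), eA.ext fun u => ?_⟩
  simp [eA, Algebra.TensorProduct.basis_apply, apply_dualBasis_left]

end BaseChange

open Matrix

variable {R M ι : Type*} [CommRing R] [AddCommGroup M] [Module R M] {B : LinearMap.BilinForm R M}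

def gramMatrix (B : LinearMap.BilinForm R M) (v : ι → M) : Matrix ι ι R :=
  Matrix.of fun i j => B (v i) (v j)

theorem isSymm_gramMatrix (hB : B.IsSymm) (v : ι → M) : (B.gramMatrix v).IsSymm :=
  IsSymm.ext fun i j => hB.eq (v j) (v i)

theorem gramMatrix_add_sum_smul [Fintype ι] [DecidableEq ι] (hB : B.IsSymm) {b d : ι → M}
    (hbd : ∀ l i, B (d l) (b i) = if i = l then 1 else 0) (x : Matrix ι ι R) :
    B.gramMatrix (fun i => b i + ∑ l, x i l • d l)
      = B.gramMatrix b + x + xᵀ + x * B.gramMatrix d * xᵀ := by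
  have hdb (i j : ι) : B (∑ l, x i l • d l) (b j) = x i j := by simp [hbd]
  have hbd' (i j : ι) : B (b i) (∑ l, x j l • d l) = x j i := by simp [hB.eq (b i), hbd]
  have hdd (i j : ι) :
      B (∑ l, x i l • d l) (∑ l, x j l • d l) = (x * B.gramMatrix d * xᵀ) i j := by
    simp only [map_sum, map_smul, LinearMap.sum_apply, LinearMap.smul_apply, smul_eq_mul,
      mul_apply, gramMatrix, of_apply, transpose_apply, Finset.mul_sum, Finset.sum_mul]
    exact Finset.sum_congr rfl fun _ _ => Finset.sum_congr rfl fun _ _ => by ring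
  refine Matrix.ext fun i j => ?_
  rw [Matrix.add_apply, Matrix.add_apply, Matrix.add_apply, transpose_apply, ← hdd]
  simp only [gramMatrix, of_apply, map_add, LinearMap.add_apply, hdb, hbd']
  ring

theorem exists_gramMatrix_eq_of_X_pow_dvd {A : Type*} [CommRing A] [Invertible (2 : A⟦X⟧)]
    [Module A⟦X⟧ M] [Fintype ι] [DecidableEq ι] {B : LinearMap.BilinForm A⟦X⟧ M} (hB : B.IsSymm)
    {a b d : ι → M} (hbd : ∀ l i, B (d l) (b i) = if i = l then 1 else 0)
    (k : ι → ℕ) (hk : ∀ i, 1 ≤ k i)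
    (hab : ∀ i j, X ^ min (k i) (k j) ∣ B (a i) (a j) - B (b i) (b j)) :
    ∃ b' : ι → M, (∀ i, ∃ c, b' i = b i + (X : A⟦X⟧) ^ k i • c) ∧
      B.gramMatrix b' = B.gramMatrix a := by
  obtain ⟨x, hx_dvd, hx⟩ := exists_add_transpose_add_mul_mul_transpose_eq k hk
    (isSymm_gramMatrix hB d) ((isSymm_gramMatrix hB a).sub (isSymm_gramMatrix hB b)) hab
  refine ⟨fun i => b i + ∑ l, x i l • d l, fun i => ?_, ?_⟩
  · choose y hy using hx_dvd i
    exact ⟨∑ l, y l • d l, by simp_rw [hy, Finset.smul_sum, mul_smul]⟩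
  · rw [gramMatrix_add_sum_smul hB hbd, add_assoc, add_assoc, ← add_assoc x, hx]
    abel

end LinearMap.BilinForm

open LinearMap.BilinForm in
theorem approximate_isometry_correction_general {F : Type*} [Field F] [CharZero F]
    {V : Type*} [AddCommGroup V] [Module F V] [FiniteDimensional F V]
    (BV : V →ₗ[F] V →ₗ[F] F) (hsymm : ∀ v w : V, BV v w = BV w v)
    (hnd : ∀ v : V, (∀ w : V, BV v w = 0) → v = 0)
    -- the F[[t]]-bilinear extension of the form to V[[t]]
    (BR : (PowerSeries F ⊗[F] V) → (PowerSeries F ⊗[F] V) → PowerSeries F)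
    (hBR_addl : ∀ x y z, BR (x + y) z = BR x z + BR y z)
    (hBR_addr : ∀ x y z, BR x (y + z) = BR x y + BR x z)
    (hBR_val : ∀ (a : PowerSeries F) (v : V) (b : PowerSeries F) (w : V),
      BR (a ⊗ₜ[F] v) (b ⊗ₜ[F] w) = a * b * algebraMap F (PowerSeries F) (BV v w))
    {m : ℕ} (k : Fin m → ℕ)
    (hk_pos : ∀ i, 1 ≤ k i)
    (a b : Fin m → PowerSeries F ⊗[F] V)
    -- `L₂` is primitive with basis `b`
    (hL₂ : ∃ L' : Submodule (PowerSeries F) (PowerSeries F ⊗[F] V),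
      IsCompl (Submodule.span (PowerSeries F) (Set.range b)) L')
    (hb_ind : ∀ c : Fin m → PowerSeries F, (∑ i, c i • b i) = 0 → ∀ i, c i = 0)
    -- the congruence (5.8): (aᵢ,aⱼ) ≡ (bᵢ,bⱼ) mod t^{min(kᵢ,kⱼ)}
    (hcong : ∀ i j : Fin m, BR (a i) (a j) - BR (b i) (b j) ∈
      Ideal.span {(PowerSeries.X : PowerSeries F) ^ min (k i) (k j)}) :
    ∃ bt : Fin m → PowerSeries F ⊗[F] V,
      (∀ i, ∃ c : PowerSeries F ⊗[F] V,
        bt i = b i + ((PowerSeries.X : PowerSeries F) ^ k i) • c) ∧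
      (∀ i j, BR (bt i) (bt j) = BR (a i) (a j)) ∧
      (∃ L' : Submodule (PowerSeries F) (PowerSeries F ⊗[F] V),
        IsCompl (Submodule.span (PowerSeries F) (Set.range bt)) L') ∧
      (∀ c : Fin m → PowerSeries F, (∑ i, c i • bt i) = 0 → ∀ i, c i = 0) := by
  have hBR := eq_baseChange_of_map_add BV BR hBR_addl hBR_addr hBR_val
  obtain ⟨L', hL'⟩ := hL₂
  obtain ⟨ψ, hψ⟩ := exists_leftInverse_linearCombination_of_isCompl
    (Fintype.linearIndependent_iff.mpr hb_ind) hL'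
  choose d hd using fun l => exists_baseChange_eq (.ofSeparatingLeft hnd) (Finsupp.lapply l ∘ₗ ψ)
  have hbd (l i : Fin m) :
      LinearMap.BilinForm.baseChange F⟦X⟧ BV (d l) (b i) = if i = l then 1 else 0 := by
    simpa [hd, Finsupp.single_apply] using congr($hψ (Finsupp.single i 1) l)
  have : Invertible (2 : F⟦X⟧) := IsUnit.invertible <| by
    rw [isUnit_iff_constantCoeff, map_ofNat]; exact isUnit_iff_ne_zero.mpr two_ne_zero
  obtain ⟨bt, hbt, hgram⟩ := exists_gramMatrix_eq_of_X_pow_dvd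
    (isSymm_iff.mpr (IsSymm.baseChange F⟦X⟧ ⟨hsymm⟩)) hbd k hk_pos
    fun i j => by simpa [hBR, ← Ideal.mem_span_singleton] using hcong i j
  obtain ⟨ψ', hψ'⟩ := exists_leftInverse_linearCombination_of_eq_add_X_smul (b' := bt) hψ
    fun i => by
      obtain ⟨c, hc⟩ := hbt i
      exact ⟨X ^ (k i - 1) • c, by rw [hc, smul_smul, ← pow_succ', Nat.sub_add_cancel (hk_pos i)]⟩
  refine ⟨bt, hbt, fun i j => by simpa [hBR, gramMatrix] using congr($hgram i j),
    ⟨_, isCompl_span_ker_of_leftInverse_linearCombination hψ'⟩,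
    Fintype.linearIndependent_iff.mp (linearIndependent_of_leftInverse_linearCombination hψ')⟩

/-- Let `k₁ ≥ ⋯ ≥ k_m ≥ 1` and let `L₁, L₂` be primitive
submodules of `V[[t]]`, free with bases `a₁, …, a_m` and `b₁, …, b_m`. If
`(aᵢ, aⱼ) ≡ (bᵢ, bⱼ) mod t^{min(kᵢ,kⱼ)}` for all `i, j`, then the `bᵢ` can be
altered to `b̃ᵢ` with `b̃ᵢ − bᵢ ∈ t^{kᵢ}·V[[t]]`, `(b̃ᵢ, b̃ⱼ) = (aᵢ, aⱼ)`, and the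
`F[[t]]`-span of the `b̃ᵢ` a primitive submodule of `V[[t]]`, free with basis
`b̃₁, …, b̃_m`. -/
theorem approximate_isometry_correction {F : Type*} [Field F] [CharZero F]
    {V : Type*} [AddCommGroup V] [Module F V] [FiniteDimensional F V]
    (BV : V →ₗ[F] V →ₗ[F] F) (hsymm : ∀ v w : V, BV v w = BV w v)
    (hnd : ∀ v : V, (∀ w : V, BV v w = 0) → v = 0)
    -- the F[[t]]-bilinear extension of the form to V[[t]]
    (BR : (PowerSeries F ⊗[F] V) → (PowerSeries F ⊗[F] V) → PowerSeries F)
    (hBR_addl : ∀ x y z, BR (x + y) z = BR x z + BR y z)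
    (hBR_addr : ∀ x y z, BR x (y + z) = BR x y + BR x z)
    (hBR_val : ∀ (a : PowerSeries F) (v : V) (b : PowerSeries F) (w : V),
      BR (a ⊗ₜ[F] v) (b ⊗ₜ[F] w) = a * b * algebraMap F (PowerSeries F) (BV v w))
    {m : ℕ} (k : Fin m → ℕ)
    (hk_anti : ∀ i j : Fin m, i ≤ j → k j ≤ k i) (hk_pos : ∀ i, 1 ≤ k i)
    (a b : Fin m → PowerSeries F ⊗[F] V)
    -- `L₁` is primitive with basis `a`
    (hL₁ : ∃ L' : Submodule (PowerSeries F) (PowerSeries F ⊗[F] V),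
      IsCompl (Submodule.span (PowerSeries F) (Set.range a)) L')
    (ha_ind : ∀ c : Fin m → PowerSeries F, (∑ i, c i • a i) = 0 → ∀ i, c i = 0)
    -- `L₂` is primitive with basis `b`
    (hL₂ : ∃ L' : Submodule (PowerSeries F) (PowerSeries F ⊗[F] V),
      IsCompl (Submodule.span (PowerSeries F) (Set.range b)) L')
    (hb_ind : ∀ c : Fin m → PowerSeries F, (∑ i, c i • b i) = 0 → ∀ i, c i = 0)
    -- the congruence (5.8): (aᵢ,aⱼ) ≡ (bᵢ,bⱼ) mod t^{min(kᵢ,kⱼ)}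
    (hcong : ∀ i j : Fin m, BR (a i) (a j) - BR (b i) (b j) ∈
      Ideal.span {(PowerSeries.X : PowerSeries F) ^ min (k i) (k j)}) :
    ∃ bt : Fin m → PowerSeries F ⊗[F] V,
      (∀ i, ∃ c : PowerSeries F ⊗[F] V,
        bt i = b i + ((PowerSeries.X : PowerSeries F) ^ k i) • c) ∧
      (∀ i j, BR (bt i) (bt j) = BR (a i) (a j)) ∧
      (∃ L' : Submodule (PowerSeries F) (PowerSeries F ⊗[F] V),
        IsCompl (Submodule.span (PowerSeries F) (Set.range bt)) L') ∧
      (∀ c : Fin m → PowerSeries F, (∑ i, c i • bt i) = 0 → ∀ i, c i = 0) :=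
  approximate_isometry_correction_general BV hsymm hnd BR hBR_addl hBR_addr hBR_val k hk_pos a b hL₂
    hb_ind hcong
end

section
/- Let W be a finite-dimensional F-vector space with nilpotent endomorphism t (an F[[t]]-module), and let B : (W ⊗_F V) × (W ⊗_F V) → S_t^2(W) be the unique F-bilinear map satisfying B(u⊗v, u'⊗v') = (v, v')·(u ⊗ u' + u' ⊗ u); thus B(x_0, ·) is the differential of the quadratic map T_W at x_0. Then for x_0 ∈ W ⊗_F V, the F-linear map y ↦ B(x_0, y) from W ⊗_F V to S_t^2(W) is surjective if and only if Im f_{x_0} = W. -/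
/-!
Polarizing `B` gives `B(x₀, u ⊗ v) = m ⊗ u + u ⊗ m` with `m = f_{x₀}(1 ⊗ v)`, so the image
of `B(x₀, ·)` is the symmetrization of `M ⊗ W`, where `M = Im f_{x₀}`. If `M = W`, a symmetric
tensor `z` is the symmetrization of `z / 2`. If `M ≠ W`, then `M + tW ≠ W` because `t` is
nilpotent (Nakayama), so some `F`-linear form `φ` vanishes on `M + tW` but not at some `w`.
Since `φ` only sees `F⟦t⟧` through the constant coefficient, `u ⊗ u' ↦ φ(u) φ(u')` is well
defined on `W ⊗_{F⟦t⟧} W`; it kills the image of `B(x₀, ·)` but not the symmetric tensor `w ⊗ w`.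
-/

open TensorProduct PowerSeries

theorem Submodule.eq_top_of_sup_range_lsmul_eq_top {R W : Type*} [CommRing R]
    [AddCommGroup W] [Module R W] {a : R} {N : ℕ} (ha : ∀ u : W, a ^ N • u = 0) {M : Submodule R W}
    (hM : M ⊔ LinearMap.range (LinearMap.lsmul R W a) = ⊤) : M = ⊤ := by
  have hsurj : Function.Surjective (a • · : W ⧸ M → W ⧸ M) := by
    intro q
    obtain ⟨u, rfl⟩ := M.mkQ_surjective q
    obtain ⟨m, hm, _, ⟨w, rfl⟩, rfl⟩ := Submodule.mem_sup.mp (hM ▸ Submodule.mem_top : u ∈ _)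
    refine ⟨M.mkQ w, ?_⟩
    simp [(Submodule.Quotient.mk_eq_zero M).mpr hm]
  rw [← Submodule.Quotient.subsingleton_iff, _root_.subsingleton_iff]
  suffices ∀ q : W ⧸ M, q = 0 from fun q q' => (this q).trans (this q').symm
  intro q
  obtain ⟨q', rfl⟩ := smul_iterate (α := W ⧸ M) a N ▸ hsurj.iterate N q
  obtain ⟨w, rfl⟩ := M.mkQ_surjective q'
  exact (M.mkQ.map_smul (a ^ N) w).symm.trans (by rw [ha, map_zero])

section Symmetrize

variable (R W : Type*) [CommRing R] [AddCommGroup W] [Module R W]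

def TensorProduct.symmetrize : W ⊗[R] W →ₗ[R] W ⊗[R] W :=
  LinearMap.id + (TensorProduct.comm R W W).toLinearMap

variable {R W}

@[simp]
theorem TensorProduct.symmetrize_apply (z : W ⊗[R] W) :
    symmetrize R W z = z + TensorProduct.comm R W W z := rfl

theorem TensorProduct.symmetrize_tmul (u u' : W) :
    symmetrize R W (u ⊗ₜ u') = u ⊗ₜ u' + u' ⊗ₜ u := rfl

theorem TensorProduct.eqLocus_comm_le_range_symmetrize (h2 : IsUnit (2 : R)) :
    LinearMap.eqLocus (TensorProduct.comm R W W).toLinearMap LinearMap.id ≤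
      LinearMap.range (symmetrize R W) := by
  intro z hz
  refine ⟨(↑h2.unit⁻¹ : R) • z, ?_⟩
  rw [map_smul, symmetrize_apply, show TensorProduct.comm R W W z = z from hz, ← two_smul R,
    smul_smul, h2.val_inv_mul, one_smul]

def Submodule.symmetrizedTensor (M : Submodule R W) : Submodule R (W ⊗[R] W) :=
  LinearMap.range (symmetrize R W ∘ₗ M.subtype.rTensor W)

theorem Submodule.symmetrize_tmul_mem_symmetrizedTensor {M : Submodule R W} {m : W} (hm : m ∈ M)
    (u : W) : symmetrize R W (m ⊗ₜ u) ∈ M.symmetrizedTensor :=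
  ⟨⟨m, hm⟩ ⊗ₜ u, rfl⟩

theorem Submodule.symmetrizedTensor_top :
    (⊤ : Submodule R W).symmetrizedTensor = LinearMap.range (symmetrize R W) := by
  rw [symmetrizedTensor, LinearMap.range_comp, LinearMap.range_eq_top.mpr, Submodule.map_top]
  exact LinearMap.rTensor_surjective W (LinearMap.range_eq_top.mp (by simp))

end Symmetrize

theorem PowerSeries.map_smul_eq_constantCoeff_smul {F W P : Type*} [CommRing F] [AddCommGroup W]
    [Module F W] [Module F⟦X⟧ W] [IsScalarTower F F⟦X⟧ W] [AddCommGroup P] [Module F P]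
    (φ : W →ₗ[F] P) (hφ : ∀ u, φ ((X : F⟦X⟧) • u) = 0) (b : F⟦X⟧) (u : W) :
    φ (b • u) = constantCoeff b • φ u := by
  conv_lhs => rw [eq_X_mul_shift_add_const b]
  rw [add_smul, mul_smul, map_add, hφ, zero_add, C_eq_algebraMap, algebraMap_smul, map_smul]

theorem Submodule.eq_top_of_tmul_self_mem_symmetrizedTensor {F W : Type*} [Field F]
    [AddCommGroup W] [Module F W] [Module F⟦X⟧ W] [IsScalarTower F F⟦X⟧ W]
    (hnilp : ∃ N : ℕ, ∀ u : W, (X : F⟦X⟧) ^ N • u = 0) {M : Submodule F⟦X⟧ W}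
    (hM : ∀ w : W, w ⊗ₜ w ∈ M.symmetrizedTensor) : M = ⊤ := by
  obtain ⟨N, hN⟩ := hnilp
  refine eq_top_of_sup_range_lsmul_eq_top hN ?_
  by_contra hne
  obtain ⟨φ, hφ0, hφ⟩ := Submodule.exists_le_ker_of_lt_top _
    (lt_top_iff_ne_top.mpr (mt (restrictScalars_eq_top_iff F _ _).mp hne))
  obtain ⟨w₀, hw₀⟩ := DFunLike.ne_iff.mp hφ0
  have hφX (u : W) : φ ((X : F⟦X⟧) • u) = 0 := hφ (mem_sup_right ⟨u, rfl⟩)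
  have hφM {m : W} (hm : m ∈ M) : φ m = 0 := hφ (mem_sup_left hm)
  have hφsmul := map_smul_eq_constantCoeff_smul φ hφX
  let Φ : W ⊗[F⟦X⟧] W →+ F := liftAddHom
    ((AddMonoidHom.mul.comp φ.toAddMonoidHom).compl₂ φ.toAddMonoidHom) fun b u u' => by
      simp only [AddMonoidHom.compl₂_apply, AddMonoidHom.comp_apply, AddMonoidHom.mul_apply,
        LinearMap.toAddMonoidHom_coe, hφsmul, smul_eq_mul]
      ring
  have hΦ : ∀ z ∈ M.symmetrizedTensor, Φ z = 0 := by
    rintro _ ⟨t, rfl⟩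
    induction t using TensorProduct.induction_on with
    | zero => simp
    | tmul m u => simp [Φ, hφM m.2]
    | add t t' ht ht' => simp only [map_add, ht, ht', add_zero]
  exact hw₀ (mul_self_eq_zero.mp (hΦ _ (hM w₀)))

theorem Submodule.eqLocus_comm_le_symmetrizedTensor_iff {F W : Type*} [Field F] [CharZero F]
    [AddCommGroup W] [Module F W] [Module F⟦X⟧ W] [IsScalarTower F F⟦X⟧ W]
    (hnilp : ∃ N : ℕ, ∀ u : W, (X : F⟦X⟧) ^ N • u = 0) (M : Submodule F⟦X⟧ W) :
    LinearMap.eqLocus (TensorProduct.comm F⟦X⟧ W W).toLinearMap LinearMap.id ≤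
      M.symmetrizedTensor ↔ M = ⊤ := by
  refine ⟨fun h => eq_top_of_tmul_self_mem_symmetrizedTensor hnilp fun w => h (by simp), ?_⟩
  rintro rfl
  rw [symmetrizedTensor_top]
  exact eqLocus_comm_le_range_symmetrize (by
    rw [← map_ofNat (C (R := F)) 2]; exact two_ne_zero.isUnit.map _)

section Polarization

variable {F W V : Type*} [CommRing F] [AddCommGroup W] [Module F W] [Module F⟦X⟧ W]
  [AddCommGroup V] [Module F V] {BV : V →ₗ[F] V →ₗ[F] F}
  {fx : W ⊗[F] V → (F⟦X⟧ ⊗[F] V) →ₗ[F⟦X⟧] W}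
  {B : W ⊗[F] V → W ⊗[F] V → W ⊗[F⟦X⟧] W}

theorem polar_tmul_eq_symmetrize
    (hfx_add : ∀ x y : W ⊗[F] V, fx (x + y) = fx x + fx y)
    (hfx_val : ∀ (u : W) (v : V) (b : F⟦X⟧) (w : V),
      fx (u ⊗ₜ[F] v) (b ⊗ₜ[F] w) = (b * algebraMap F F⟦X⟧ (BV v w)) • u)
    (hB_addl : ∀ x y z, B (x + y) z = B x z + B y z)
    (hB_val : ∀ (u : W) (v : V) (u' : W) (v' : V),
      B (u ⊗ₜ[F] v) (u' ⊗ₜ[F] v') =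
        algebraMap F F⟦X⟧ (BV v v') • (u ⊗ₜ u' + u' ⊗ₜ u))
    (x : W ⊗[F] V) (u : W) (v : V) :
    B x (u ⊗ₜ v) = symmetrize F⟦X⟧ W (fx x (1 ⊗ₜ v) ⊗ₜ u) := by
  induction x using TensorProduct.induction_on with
  | zero =>
    have hB0 : B 0 (u ⊗ₜ v) = 0 :=
      (AddMonoidHom.mk' (B · (u ⊗ₜ v)) (hB_addl · · _)).map_zero
    have hfx0 : fx 0 = 0 := (AddMonoidHom.mk' fx hfx_add).map_zero
    simp [hB0, hfx0]
  | tmul u₀ v₀ => rw [hB_val, hfx_val, one_mul, ← smul_tmul', map_smul, symmetrize_tmul]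
  | add x x' hx hx' => rw [hB_addl, hx, hx', hfx_add, LinearMap.add_apply, add_tmul, map_add]

theorem range_polar_eq_symmetrizedTensor
    (hfx_add : ∀ x y : W ⊗[F] V, fx (x + y) = fx x + fx y)
    (hfx_val : ∀ (u : W) (v : V) (b : F⟦X⟧) (w : V),
      fx (u ⊗ₜ[F] v) (b ⊗ₜ[F] w) = (b * algebraMap F F⟦X⟧ (BV v w)) • u)
    (hB_addl : ∀ x y z, B (x + y) z = B x z + B y z)
    (hB_addr : ∀ x y z, B x (y + z) = B x y + B x z)
    (hB_val : ∀ (u : W) (v : V) (u' : W) (v' : V),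
      B (u ⊗ₜ[F] v) (u' ⊗ₜ[F] v') =
        algebraMap F F⟦X⟧ (BV v v') • (u ⊗ₜ u' + u' ⊗ₜ u))
    (x : W ⊗[F] V) :
    Set.range (B x) = (LinearMap.range (fx x)).symmetrizedTensor := by
  have key := polar_tmul_eq_symmetrize hfx_add hfx_val hB_addl hB_val x
  let Bx : W ⊗[F] V →+ W ⊗[F⟦X⟧] W := AddMonoidHom.mk' (B x) (hB_addr x)
  change Set.range Bx = _
  apply subset_antisymm
  · rintro _ ⟨y, rfl⟩
    induction y using TensorProduct.induction_on with
    | zero => rw [map_zero]; exact zero_mem _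
    | tmul u v =>
      change B x _ ∈ _
      rw [key]
      exact Submodule.symmetrize_tmul_mem_symmetrizedTensor (LinearMap.mem_range_self _ _) u
    | add y y' hy hy' => rw [map_add]; exact add_mem hy hy'
  have hmem (c : F⟦X⟧ ⊗[F] V) (u : W) : symmetrize F⟦X⟧ W (fx x c ⊗ₜ u) ∈ Bx.range := by
    induction c using TensorProduct.induction_on with
    | zero => simp
    | tmul b v =>
      -- `fx x (b ⊗ v) ⊗ u = fx x (1 ⊗ v) ⊗ (b • u)`
      refine ⟨(b • u) ⊗ₜ v, ?_⟩
      rw [AddMonoidHom.mk'_apply, key, ← smul_tmul, ← map_smul, smul_tmul', smul_eq_mul, mul_one]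
    | add c c' hc hc' => rw [map_add, add_tmul, map_add]; exact add_mem hc hc'
  rintro _ ⟨t, rfl⟩
  change _ ∈ Bx.range
  induction t using TensorProduct.induction_on with
  | zero => rw [map_zero]; exact zero_mem _
  | tmul m u => obtain ⟨_, c, rfl⟩ := m; exact hmem c u
  | add t t' ht ht' => rw [map_add]; exact add_mem ht ht'

end Polarization

theorem tW_differential_surjective_iff_general {F : Type*} [Field F] [CharZero F]
    {W : Type*} [AddCommGroup W] [Module F W] [Module (PowerSeries F) W]
    [IsScalarTower F (PowerSeries F) W]
    (hnilp : ∃ N : ℕ, ∀ u : W, ((PowerSeries.X : PowerSeries F) ^ N) • u = 0)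
    {V : Type*} [AddCommGroup V] [Module F V]
    (BV : V →ₗ[F] V →ₗ[F] F)
    -- `f_x`, characterized by additivity and its values on simple tensors
    (fx : (W ⊗[F] V) → ((PowerSeries F ⊗[F] V) →ₗ[PowerSeries F] W))
    (hfx_add : ∀ x y : W ⊗[F] V, fx (x + y) = fx x + fx y)
    (hfx_val : ∀ (u : W) (v : V) (b : PowerSeries F) (w : V),
      fx (u ⊗ₜ[F] v) (b ⊗ₜ[F] w) = (b * algebraMap F (PowerSeries F) (BV v w)) • u)
    -- the polarized form `B` of `T_W`, characterized by biadditivity and its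
    -- values on simple tensors
    (B : (W ⊗[F] V) → (W ⊗[F] V) → (W ⊗[PowerSeries F] W))
    (hB_addl : ∀ x y z, B (x + y) z = B x z + B y z)
    (hB_addr : ∀ x y z, B x (y + z) = B x y + B x z)
    (hB_val : ∀ (u : W) (v : V) (u' : W) (v' : V),
      B (u ⊗ₜ[F] v) (u' ⊗ₜ[F] v')
        = algebraMap F (PowerSeries F) (BV v v') •
          (u ⊗ₜ[PowerSeries F] u' + u' ⊗ₜ[PowerSeries F] u))
    (x₀ : W ⊗[F] V) :
    (∀ z ∈ LinearMap.eqLocus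
        ((TensorProduct.comm (PowerSeries F) W W).toLinearMap) LinearMap.id,
      ∃ y : W ⊗[F] V, B x₀ y = z) ↔
    LinearMap.range (fx x₀) = ⊤ := by
  rw [← Submodule.eqLocus_comm_le_symmetrizedTensor_iff hnilp, ← SetLike.coe_subset_coe,
    ← range_polar_eq_symmetrizedTensor hfx_add hfx_val hB_addl hB_addr hB_val x₀]
  rfl

/-- Let `W` be a finite-dimensional `F`-vector space with a
nilpotent action of `t` (an `F[[t]]`-module), and let `B` be the unique `F`-bilinear
map `(W ⊗_F V) × (W ⊗_F V) → S_t²(W)` with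
`B(u⊗v, u'⊗v') = (v,v')·(u ⊗ u' + u' ⊗ u)` (so `B(x₀,·)` is the differential of the
quadratic map `T_W` at `x₀`). Then `y ↦ B(x₀, y)` is surjective onto the symmetric
tensors `S_t²(W) ⊆ W ⊗_{F[[t]]} W` if and only if `Im f_{x₀} = W`. -/
theorem tW_differential_surjective_iff {F : Type*} [Field F] [CharZero F]
    {W : Type*} [AddCommGroup W] [Module F W] [Module (PowerSeries F) W]
    [IsScalarTower F (PowerSeries F) W] [FiniteDimensional F W]
    (hnilp : ∃ N : ℕ, ∀ u : W, ((PowerSeries.X : PowerSeries F) ^ N) • u = 0)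
    {V : Type*} [AddCommGroup V] [Module F V] [FiniteDimensional F V]
    (BV : V →ₗ[F] V →ₗ[F] F) (hsymm : ∀ v w : V, BV v w = BV w v)
    (hnd : ∀ v : V, (∀ w : V, BV v w = 0) → v = 0)
    -- `f_x`, characterized by additivity and its values on simple tensors
    (fx : (W ⊗[F] V) → ((PowerSeries F ⊗[F] V) →ₗ[PowerSeries F] W))
    (hfx_add : ∀ x y : W ⊗[F] V, fx (x + y) = fx x + fx y)
    (hfx_val : ∀ (u : W) (v : V) (b : PowerSeries F) (w : V),
      fx (u ⊗ₜ[F] v) (b ⊗ₜ[F] w) = (b * algebraMap F (PowerSeries F) (BV v w)) • u)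
    -- the polarized form `B` of `T_W`, characterized by biadditivity and its
    -- values on simple tensors
    (B : (W ⊗[F] V) → (W ⊗[F] V) → (W ⊗[PowerSeries F] W))
    (hB_addl : ∀ x y z, B (x + y) z = B x z + B y z)
    (hB_addr : ∀ x y z, B x (y + z) = B x y + B x z)
    (hB_val : ∀ (u : W) (v : V) (u' : W) (v' : V),
      B (u ⊗ₜ[F] v) (u' ⊗ₜ[F] v')
        = algebraMap F (PowerSeries F) (BV v v') •
          (u ⊗ₜ[PowerSeries F] u' + u' ⊗ₜ[PowerSeries F] u))
    (x₀ : W ⊗[F] V) :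
    (∀ z ∈ LinearMap.eqLocus
        ((TensorProduct.comm (PowerSeries F) W W).toLinearMap) LinearMap.id,
      ∃ y : W ⊗[F] V, B x₀ y = z) ↔
    LinearMap.range (fx x₀) = ⊤ :=
  tW_differential_surjective_iff_general hnilp BV fx hfx_add hfx_val B hB_addl hB_addr hB_val x₀
end
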